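/- arXiv:1904.07186 — 9 statements merged into one kernel-verified Lean document; each statement's English description precedes it below -/
import Mathlib

section
/- Let (y₁,y₂) : [0,τ) → (0,∞)² be a differentiable solution of the ODE system with y₁(0), y₂(0) > 0, where 0 < τ ≤ ∞. Let z₁, z₂ : [0,τ) → [0,∞) be measurable functions such that for i = 1,2, j = 3−i, the function s ↦ h_i(s)·z_i(s)^{p_ii}·z_j(s)^{p_ij} is integrable on [0,t] for every t < τ, z_i(0) = y_i(0), and z_i(t) ≥ z_i(0) + ∫₀ᵗ h_i(s)·z_i(s)^{p_ii}·z_j(s)^{p_ij} ds for all t ∈ [0,τ). Then z_i(t) ≥ y_i(t) for all t ∈ [0,τ) and i = 1,2. -/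
/-!
Fix `t < τ`. On `[0, t]` the solution `y` is continuous, and both `y` and `z` stay above `y(0) > 0`
because the integrands are nonnegative. The map `(u, v) ↦ u ^ a * v ^ b` is nondecreasing in each
variable and Lipschitz on the box `[y(0), max y]`, so replacing `z` by `min z y` shows that the
rate along `y` exceeds the rate along `z` by at most `C * g`, where `g = ∑ₖ (yₖ - zₖ)⁺`.
Integrating gives `g c ≤ C' * ∫₀ᶜ g`, and iterating this Gronwall inequality gives
`g ≤ M (C' t)ⁿ / n!` for every `n`, hence `g = 0`.
-/

open MeasureTheory Set Filter Topology
open scoped NNReal Nat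

theorem MonotoneOn.sub_le_of_lipschitzOnWith {F : ℝ × ℝ → ℝ} {m M u w : ℝ × ℝ} {K : ℝ≥0}
    {d : ℝ} (hmono : MonotoneOn F (Ici m)) (hlip : LipschitzOnWith K F (Icc m M))
    (hu : u ∈ Icc m M) (hw : m ≤ w) (hd : 0 ≤ d) (hd₁ : u.1 - w.1 ≤ d) (hd₂ : u.2 - w.2 ≤ d) :
    F u - F w ≤ K * d := by
  -- `w` may lie above the box; monotonicity lets us replace it by `u ⊓ w`, which lies inside.
  have hinf : u ⊓ w ∈ Icc m M := ⟨le_inf hu.1 hw, inf_le_left.trans hu.2⟩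
  have hdist : dist u (u ⊓ w) ≤ d := by
    have hcoord : ∀ x y : ℝ, x - y ≤ d → dist x (x ⊓ y) ≤ d := fun x y hxy => by
      rcases le_total x y with h | h <;> simp [h, Real.dist_eq, abs_of_nonneg, hd, hxy]
    exact max_le (hcoord _ _ hd₁) (hcoord _ _ hd₂)
  calc F u - F w ≤ F u - F (u ⊓ w) := by
        gcongr; exact hmono hinf.1 hw inf_le_right
    _ ≤ dist (F u) (F (u ⊓ w)) := le_abs_self _
    _ ≤ K * dist u (u ⊓ w) := hlip.dist_le_mul u hu _ hinf
    _ ≤ K * d := by gcongr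

theorem monotoneOn_rpow_mul_rpow {a b : ℝ} (ha : 0 ≤ a) (hb : 0 ≤ b) :
    MonotoneOn (fun q : ℝ × ℝ => q.1 ^ a * q.2 ^ b) (Ici 0) := by
  intro q hq r _ hqr
  exact mul_le_mul (Real.rpow_le_rpow hq.1 hqr.1 ha) (Real.rpow_le_rpow hq.2 hqr.2 hb)
    (Real.rpow_nonneg hq.2 b) (Real.rpow_nonneg (hq.1.trans hqr.1) a)

theorem exists_lipschitzOnWith_rpow_mul_rpow (a b : ℝ) {m M : ℝ × ℝ} (hm₁ : 0 < m.1)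
    (hm₂ : 0 < m.2) : ∃ K, LipschitzOnWith K (fun q : ℝ × ℝ => q.1 ^ a * q.2 ^ b) (Icc m M) := by
  refine LocallyLipschitzOn.exists_lipschitzOnWith_of_compact isCompact_Icc ?_
  refine ContDiffOn.locallyLipschitzOn (convex_Icc m M) fun q hq => ?_
  have h₁ : q.1 ≠ 0 := (hm₁.trans_le hq.1.1).ne'
  have h₂ : q.2 ≠ 0 := (hm₂.trans_le hq.1.2).ne'
  exact ((contDiffAt_fst.rpow_const_of_ne h₁).mul
    (contDiffAt_snd.rpow_const_of_ne h₂)).contDiffWithinAt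

theorem le_mul_pow_div_factorial_of_le_mul_integral {g : ℝ → ℝ} {C M t : ℝ} (hC : 0 ≤ C)
    (hg : IntervalIntegrable g volume 0 t) (hM : ∀ s ∈ Icc 0 t, g s ≤ M)
    (hle : ∀ s ∈ Icc 0 t, g s ≤ C * ∫ u in (0 : ℝ)..s, g u) (n : ℕ) :
    ∀ s ∈ Icc 0 t, g s ≤ M * (C * s) ^ n / n ! := by
  induction n with
  | zero => simpa using hM
  | succ n ih =>
    intro s hs
    have hsub : uIcc 0 s ⊆ uIcc 0 t := uIcc_subset_uIcc left_mem_uIcc (Icc_subset_uIcc hs)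
    have hint : ∫ u in (0 : ℝ)..s, g u ≤ ∫ u in (0 : ℝ)..s, M * (C * u) ^ n / n ! :=
      intervalIntegral.integral_mono_on hs.1 (hg.mono_set hsub)
        ((by fun_prop : Continuous _).intervalIntegrable _ _)
        fun u hu => ih u ⟨hu.1, hu.2.trans hs.2⟩
    calc g s ≤ C * ∫ u in (0 : ℝ)..s, g u := hle s hs
      _ ≤ C * ∫ u in (0 : ℝ)..s, M * (C * u) ^ n / n ! := by gcongr
      _ = M * (C * s) ^ (n + 1) / (n + 1)! := by
        simp only [mul_pow, mul_div_assoc, intervalIntegral.integral_const_mul,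
          intervalIntegral.integral_div, integral_pow, Nat.factorial_succ]
        push_cast
        field_simp
        ring

theorem le_zero_of_le_mul_integral {g : ℝ → ℝ} {C M t : ℝ} (hC : 0 ≤ C)
    (hg : IntervalIntegrable g volume 0 t) (hM : ∀ s ∈ Icc 0 t, g s ≤ M)
    (hle : ∀ s ∈ Icc 0 t, g s ≤ C * ∫ u in (0 : ℝ)..s, g u) : ∀ s ∈ Icc 0 t, g s ≤ 0 := by
  intro s hs
  have hlim : Tendsto (fun n : ℕ => M * (C * s) ^ n / n !) atTop (𝓝 0) := by
    simpa [mul_div_assoc] using (FloorSemiring.tendsto_pow_div_factorial_atTop (C * s)).const_mul M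
  exact ge_of_tendsto' hlim fun n =>
    le_mul_pow_div_factorial_of_le_mul_integral hC hg hM hle n s hs

theorem eq_add_integral_of_hasDerivWithinAt_Icc {E : Type*} [NormedAddCommGroup E]
    [NormedSpace ℝ E] [CompleteSpace E] {f f' : ℝ → E} {a b c : ℝ}
    (hf : ∀ x ∈ Icc a b, HasDerivWithinAt f (f' x) (Icc a b) x)
    (hf' : ContinuousOn f' (Icc a b)) (hc : c ∈ Icc a b) : f c = f a + ∫ x in a..c, f' x := by
  have hac : Icc a c ⊆ Icc a b := Icc_subset_Icc_right hc.2
  rw [intervalIntegral.integral_eq_sub_of_hasDerivAt_of_le hc.1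
    (HasDerivWithinAt.continuousOn fun x hx => (hf x (hac hx)).mono hac)
    (fun x hx => (hf x (hac (Ioo_subset_Icc_self hx))).hasDerivAt
      (Filter.mem_of_superset (Icc_mem_nhds hx.1 hx.2) hac))
    ((hf'.mono hac).intervalIntegrable_of_Icc hc.1)]
  abel

theorem le_of_add_integral_le {f g : ℝ → ℝ} {a c : ℝ} (hac : a ≤ c)
    (hg : ∀ u ∈ Icc a c, 0 ≤ g u) (h : f a + ∫ u in a..c, g u ≤ f c) : f a ≤ f c :=
  le_of_add_le_of_nonneg_left h (intervalIntegral.integral_nonneg hac hg)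

theorem intervalIntegrable_max_sub_zero {f g : ℝ → ℝ} {a b : ℝ} (hf : ContinuousOn f (uIcc a b))
    (hg : Measurable g) (hg₀ : ∀ x, 0 ≤ g x) :
    IntervalIntegrable (fun x => max (f x - g x) 0) volume a b := by
  have hfi := hf.intervalIntegrable (μ := volume)
  refine hfi.abs.mono_fun' ?_ (ae_of_all _ fun x => ?_)
  · exact ((intervalIntegrable_iff.1 hfi).aestronglyMeasurable.sub
      hg.aestronglyMeasurable).sup aestronglyMeasurable_const
  · have := hg₀ x
    dsimp only
    rw [Real.norm_eq_abs, abs_of_nonneg (le_max_right _ _)]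
    exact max_le (by linarith [le_abs_self (f x)]) (abs_nonneg _)

section Comparison

variable {ι : Type*} [Fintype ι] {y z fy fz : ι → ℝ → ℝ} {t C : ℝ}

theorem sum_max_sub_le_mul_integral (hC : 0 ≤ C)
    (hfy : ∀ i, IntervalIntegrable (fy i) volume 0 t)
    (hfz : ∀ i, IntervalIntegrable (fz i) volume 0 t)
    (hy : ∀ i, ∀ s ∈ Icc 0 t, y i s ≤ y i 0 + ∫ u in (0 : ℝ)..s, fy i u)
    (hz : ∀ i, ∀ s ∈ Icc 0 t, z i 0 + ∫ u in (0 : ℝ)..s, fz i u ≤ z i s)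
    (hyz₀ : ∀ i, y i 0 ≤ z i 0)
    (hf : ∀ i, ∀ s ∈ Icc 0 t, fy i s - fz i s ≤ C * ∑ k, max (y k s - z k s) 0)
    (hg : IntervalIntegrable (fun s => ∑ k, max (y k s - z k s) 0) volume 0 t) :
    ∀ c ∈ Icc 0 t, ∑ k, max (y k c - z k c) 0 ≤
      (Fintype.card ι * C) * ∫ u in (0 : ℝ)..c, ∑ k, max (y k u - z k u) 0 := by
  intro c hc
  set g : ℝ → ℝ := fun s => ∑ k, max (y k s - z k s) 0
  have hsub : uIcc 0 c ⊆ uIcc 0 t := uIcc_subset_uIcc left_mem_uIcc (Icc_subset_uIcc hc)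
  have hdiff : ∀ k, y k c - z k c ≤ C * ∫ u in (0 : ℝ)..c, g u := by
    intro k
    have hfyc := (hfy k).mono_set hsub
    have hfzc := (hfz k).mono_set hsub
    calc y k c - z k c ≤ ∫ u in (0 : ℝ)..c, (fy k u - fz k u) := by
          rw [intervalIntegral.integral_sub hfyc hfzc]
          linarith [hy k c hc, hz k c hc, hyz₀ k]
      _ ≤ ∫ u in (0 : ℝ)..c, C * g u :=
          intervalIntegral.integral_mono_on hc.1 (hfyc.sub hfzc)
            ((hg.mono_set hsub).const_mul C) fun u hu => hf k u ⟨hu.1, hu.2.trans hc.2⟩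
      _ = C * ∫ u in (0 : ℝ)..c, g u := intervalIntegral.integral_const_mul _ _
  have hint₀ : 0 ≤ C * ∫ u in (0 : ℝ)..c, g u := mul_nonneg hC <|
    intervalIntegral.integral_nonneg hc.1 fun u _ => Finset.sum_nonneg fun k _ => le_max_right _ _
  calc g c ≤ ∑ _k : ι, C * ∫ u in (0 : ℝ)..c, g u :=
        Finset.sum_le_sum fun k _ => max_le (hdiff k) hint₀
    _ = (Fintype.card ι * C) * ∫ u in (0 : ℝ)..c, g u := by simp [mul_assoc]

theorem le_of_integral_comparison (hC : 0 ≤ C) (hyc : ∀ i, ContinuousOn (y i) (Icc 0 t))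
    (hzm : ∀ i, Measurable (z i)) (hz₀ : ∀ i s, 0 ≤ z i s)
    (hfy : ∀ i, IntervalIntegrable (fy i) volume 0 t)
    (hfz : ∀ i, IntervalIntegrable (fz i) volume 0 t)
    (hy : ∀ i, ∀ s ∈ Icc 0 t, y i s ≤ y i 0 + ∫ u in (0 : ℝ)..s, fy i u)
    (hz : ∀ i, ∀ s ∈ Icc 0 t, z i 0 + ∫ u in (0 : ℝ)..s, fz i u ≤ z i s)
    (hyz₀ : ∀ i, y i 0 ≤ z i 0)
    (hf : ∀ i, ∀ s ∈ Icc 0 t, fy i s - fz i s ≤ C * ∑ k, max (y k s - z k s) 0) :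
    ∀ i, ∀ s ∈ Icc 0 t, y i s ≤ z i s := by
  intro i s hs
  set g : ℝ → ℝ := fun s => ∑ k, max (y k s - z k s) 0
  have ht : 0 ≤ t := hs.1.trans hs.2
  have hg : IntervalIntegrable g volume 0 t := by
    have := IntervalIntegrable.sum Finset.univ fun k _ => intervalIntegrable_max_sub_zero
      (by rw [uIcc_of_le ht]; exact hyc k) (hzm k) (hz₀ k)
    simpa only [Finset.sum_fn] using this
  obtain ⟨M, hM⟩ : ∃ M, ∀ s ∈ Icc 0 t, g s ≤ M := by
    choose B hB using fun k => isCompact_Icc.exists_bound_of_continuousOn (hyc k)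
    refine ⟨∑ k, B k, fun s hs => Finset.sum_le_sum fun k _ => ?_⟩
    have := (Real.norm_eq_abs _ ▸ hB k s hs : |y k s| ≤ B k)
    exact max_le (by linarith [le_abs_self (y k s), hz₀ k s]) ((abs_nonneg _).trans this)
  have hgs := le_zero_of_le_mul_integral (by positivity) hg hM
    (sum_max_sub_le_mul_integral hC hfy hfz hy hz hyz₀ hf hg) s hs
  have hyzs : y i s - z i s ≤ g s := (le_max_left _ _).trans <|
    Finset.single_le_sum (f := fun k => max (y k s - z k s) 0) (fun k _ => le_max_right _ _)
      (Finset.mem_univ i)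
  linarith

end Comparison

noncomputable def odeRHS (p : Fin 2 → Fin 2 → ℝ) (h w : Fin 2 → ℝ → ℝ) (i : Fin 2) (s : ℝ) : ℝ :=
  h i s * w i s ^ p i i * w (1 - i) s ^ p i (1 - i)

theorem odeRHS_nonneg {p : Fin 2 → Fin 2 → ℝ} {h w : Fin 2 → ℝ → ℝ} {i : Fin 2} {s : ℝ}
    (hh : 0 ≤ h i s) (hw : ∀ j, 0 ≤ w j s) : 0 ≤ odeRHS p h w i s :=
  mul_nonneg (mul_nonneg hh (Real.rpow_nonneg (hw i) _)) (Real.rpow_nonneg (hw (1 - i)) _)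

theorem ContinuousOn.odeRHS {p : Fin 2 → Fin 2 → ℝ} {h w : Fin 2 → ℝ → ℝ} {i : Fin 2} {S : Set ℝ}
    (hh : ContinuousOn (h i) S) (hp : ∀ i j, 0 ≤ p i j) (hw : ∀ j, ContinuousOn (w j) S) :
    ContinuousOn (odeRHS p h w i) S :=
  (hh.mul ((hw i).rpow_const fun _ _ => Or.inr (hp _ _))).mul
    ((hw (1 - i)).rpow_const fun _ _ => Or.inr (hp _ _))

theorem exists_odeRHS_sub_le {p : Fin 2 → Fin 2 → ℝ} {h y z : Fin 2 → ℝ → ℝ} {m : Fin 2 → ℝ}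
    {a b : ℝ} (hp : ∀ i j, 0 ≤ p i j) (hh : ∀ i, ContinuousOn (h i) (Icc a b))
    (hh₀ : ∀ i, ∀ s ∈ Icc a b, 0 ≤ h i s) (hyc : ∀ i, ContinuousOn (y i) (Icc a b))
    (hm : ∀ i, 0 < m i) (hy : ∀ i, ∀ s ∈ Icc a b, m i ≤ y i s)
    (hz : ∀ i, ∀ s ∈ Icc a b, m i ≤ z i s) :
    ∃ C, 0 ≤ C ∧ ∀ i, ∀ s ∈ Icc a b,
      odeRHS p h y i s - odeRHS p h z i s ≤ C * ∑ k, max (y k s - z k s) 0 := by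
  choose H hH using fun i => isCompact_Icc.exists_bound_of_continuousOn (hh i)
  choose M hM using fun i => isCompact_Icc.exists_bound_of_continuousOn (hyc i)
  choose K hK using fun i => exists_lipschitzOnWith_rpow_mul_rpow (p i i) (p i (1 - i))
    (m := (m i, m (1 - i))) (M := (M i, M (1 - i))) (hm i) (hm (1 - i))
  refine ⟨∑ i, |H i| * K i, by positivity, fun i s hs => ?_⟩
  set g := ∑ k, max (y k s - z k s) 0
  have hg₀ : 0 ≤ g := Finset.sum_nonneg fun k _ => le_max_right _ _
  have hg : ∀ k, y k s - z k s ≤ g := fun k => (le_max_left _ _).trans <|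
    Finset.single_le_sum (f := fun k => max (y k s - z k s) 0) (fun k _ => le_max_right _ _)
      (Finset.mem_univ k)
  have hyM : ∀ k, y k s ≤ M k := fun k => (le_abs_self _).trans (hM k s hs)
  have hF := ((monotoneOn_rpow_mul_rpow (hp i i) (hp i (1 - i))).mono
    (Ici_subset_Ici.2 ⟨(hm i).le, (hm (1 - i)).le⟩)).sub_le_of_lipschitzOnWith (hK i)
    (u := (y i s, y (1 - i) s)) (w := (z i s, z (1 - i) s))
    ⟨⟨hy i s hs, hy (1 - i) s hs⟩, ⟨hyM i, hyM (1 - i)⟩⟩ ⟨hz i s hs, hz (1 - i) s hs⟩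
    hg₀ (hg i) (hg (1 - i))
  have hhH : h i s ≤ |H i| := (le_abs_self _).trans ((hH i s hs).trans (le_abs_self _))
  calc odeRHS p h y i s - odeRHS p h z i s
        = h i s * (y i s ^ p i i * y (1 - i) s ^ p i (1 - i)
          - z i s ^ p i i * z (1 - i) s ^ p i (1 - i)) := by
        simp only [odeRHS]; ring
    _ ≤ |H i| * (K i * g) := (mul_le_mul_of_nonneg_left hF (hh₀ i s hs)).trans
        (mul_le_mul_of_nonneg_right hhH (by positivity))
    _ = (|H i| * K i) * g := by ring
    _ ≤ (∑ i, |H i| * K i) * g := by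
        gcongr
        exact Finset.single_le_sum (f := fun i => |H i| * K i) (fun i _ => by positivity)
          (Finset.mem_univ i)

theorem statement2_general (p : Fin 2 → Fin 2 → ℝ) (hp : ∀ i j, 0 ≤ p i j)
    (h : Fin 2 → ℝ → ℝ)
    (hhc : ∀ i, ContinuousOn (h i) (Ici 0))
    (hhp : ∀ i, ∀ t : ℝ, 0 ≤ t → 0 < h i t)
    (τ : EReal)
    (y : Fin 2 → ℝ → ℝ)
    (hy0 : ∀ i, 0 < y i 0)
    (hypos : ∀ i, ∀ t : ℝ, 0 ≤ t → (t : EReal) < τ → 0 < y i t)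
    (hyd : ∀ i, ∀ t : ℝ, 0 ≤ t → (t : EReal) < τ →
      HasDerivWithinAt (y i)
        (h i t * y i t ^ p i i * y (1 - i) t ^ p i (1 - i))
        {s : ℝ | 0 ≤ s ∧ (s : EReal) < τ} t)
    (z : Fin 2 → ℝ → ℝ)
    (hzm : ∀ i, Measurable (z i))
    (hznn : ∀ i, ∀ t : ℝ, 0 ≤ z i t)
    (hzint : ∀ i, ∀ t : ℝ, 0 ≤ t → (t : EReal) < τ →
      IntervalIntegrable
        (fun s => h i s * z i s ^ p i i * z (1 - i) s ^ p i (1 - i)) volume 0 t)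
    (hz0 : ∀ i, z i 0 = y i 0)
    (hzge : ∀ i, ∀ t : ℝ, 0 ≤ t → (t : EReal) < τ →
      z i 0 + (∫ s in (0:ℝ)..t, h i s * z i s ^ p i i * z (1 - i) s ^ p i (1 - i))
        ≤ z i t) :
    ∀ i, ∀ t : ℝ, 0 ≤ t → (t : EReal) < τ → y i t ≤ z i t := by
  intro i t ht htτ
  have hsub : Icc 0 t ⊆ {s : ℝ | 0 ≤ s ∧ (s : EReal) < τ} := fun s hs =>
    ⟨hs.1, (EReal.coe_le_coe_iff.2 hs.2).trans_lt htτ⟩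
  have hyd' : ∀ j, ∀ s ∈ Icc 0 t, HasDerivWithinAt (y j) (odeRHS p h y j s) (Icc 0 t) s :=
    fun j s hs => (hyd j s (hsub hs).1 (hsub hs).2).mono hsub
  have hyc : ∀ j, ContinuousOn (y j) (Icc 0 t) := fun j => HasDerivWithinAt.continuousOn (hyd' j)
  have hhc' : ∀ j, ContinuousOn (h j) (Icc 0 t) := fun j => (hhc j).mono Icc_subset_Ici_self
  have hfy : ∀ j, ContinuousOn (odeRHS p h y j) (Icc 0 t) := fun j => (hhc' j).odeRHS hp hyc
  have hy : ∀ j, ∀ c ∈ Icc 0 t, y j c = y j 0 + ∫ u in (0 : ℝ)..c, odeRHS p h y j u :=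
    fun j c hc => eq_add_integral_of_hasDerivWithinAt_Icc (hyd' j) (hfy j) hc
  have hz : ∀ j, ∀ c ∈ Icc 0 t, z j 0 + ∫ u in (0 : ℝ)..c, odeRHS p h z j u ≤ z j c :=
    fun j c hc => hzge j c hc.1 (hsub hc).2
  have hyy₀ : ∀ j, ∀ c ∈ Icc 0 t, y j 0 ≤ y j c := fun j c hc =>
    le_of_add_integral_le hc.1 (fun u hu => odeRHS_nonneg (hhp j u hu.1).le fun k =>
      (hypos k u hu.1 (hsub ⟨hu.1, hu.2.trans hc.2⟩).2).le) (hy j c hc).ge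
  have hzy₀ : ∀ j, ∀ c ∈ Icc 0 t, y j 0 ≤ z j c := fun j c hc => hz0 j ▸
    le_of_add_integral_le hc.1 (fun u hu => odeRHS_nonneg (hhp j u hu.1).le fun k => hznn k u)
      (hz j c hc)
  obtain ⟨C, hC, hf⟩ :=
    exists_odeRHS_sub_le hp hhc' (fun j s hs => (hhp j s hs.1).le) hyc hy0 hyy₀ hzy₀
  exact le_of_integral_comparison hC hyc hzm hznn
    (fun j => (hfy j).intervalIntegrable_of_Icc ht) (fun j => hzint j t ht htτ)
    (fun j c hc => (hy j c hc).le) hz (fun j => (hz0 j).ge) hf i t ⟨ht, le_rfl⟩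

/-- comparison theorem (Theorem 3.1 of the paper), `≥` case.
If `(y₁,y₂)` is a positive differentiable solution of the ODE system on `[0,τ)`
(with `0 < τ ≤ ∞`, encoded via `τ : EReal`), and `z₁,z₂` are nonnegative
measurable functions satisfying the corresponding integral inequalities with the
same initial values, then `zᵢ(t) ≥ yᵢ(t)` on `[0,τ)`. -/
theorem statement2 (p : Fin 2 → Fin 2 → ℝ) (hp : ∀ i j, 0 ≤ p i j)
    (h : Fin 2 → ℝ → ℝ)
    (hhc : ∀ i, ContinuousOn (h i) (Ici 0))
    (hhp : ∀ i, ∀ t : ℝ, 0 ≤ t → 0 < h i t)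
    (τ : EReal) (hτ : 0 < τ)
    (y : Fin 2 → ℝ → ℝ)
    (hy0 : ∀ i, 0 < y i 0)
    (hypos : ∀ i, ∀ t : ℝ, 0 ≤ t → (t : EReal) < τ → 0 < y i t)
    (hyd : ∀ i, ∀ t : ℝ, 0 ≤ t → (t : EReal) < τ →
      HasDerivWithinAt (y i)
        (h i t * y i t ^ p i i * y (1 - i) t ^ p i (1 - i))
        {s : ℝ | 0 ≤ s ∧ (s : EReal) < τ} t)
    (z : Fin 2 → ℝ → ℝ)
    (hzm : ∀ i, Measurable (z i))
    (hznn : ∀ i, ∀ t : ℝ, 0 ≤ z i t)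
    (hzint : ∀ i, ∀ t : ℝ, 0 ≤ t → (t : EReal) < τ →
      IntervalIntegrable
        (fun s => h i s * z i s ^ p i i * z (1 - i) s ^ p i (1 - i)) volume 0 t)
    (hz0 : ∀ i, z i 0 = y i 0)
    (hzge : ∀ i, ∀ t : ℝ, 0 ≤ t → (t : EReal) < τ →
      z i 0 + (∫ s in (0:ℝ)..t, h i s * z i s ^ p i i * z (1 - i) s ^ p i (1 - i))
        ≤ z i t) :
    ∀ i, ∀ t : ℝ, 0 ≤ t → (t : EReal) < τ → y i t ≤ z i t :=
  statement2_general p hp h hhc hhp τ y hy0 hypos hyd z hzm hznn hzint hz0 hzge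
end

section
/- Let (y₁,y₂) : [0,τ) → (0,∞)² be a differentiable solution of the ODE system with y₁(0), y₂(0) > 0, where 0 < τ ≤ ∞. Let z₁, z₂ : [0,τ) → [0,∞) be measurable functions such that for i = 1,2, j = 3−i, the function s ↦ h_i(s)·z_i(s)^{p_ii}·z_j(s)^{p_ij} is integrable on [0,t] for every t < τ, z_i(0) = y_i(0), and z_i(t) ≤ z_i(0) + ∫₀ᵗ h_i(s)·z_i(s)^{p_ii}·z_j(s)^{p_ij} ds for all t ∈ [0,τ). Then z_i(t) ≤ y_i(t) for all t ∈ [0,τ) and i = 1,2. -/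
open MeasureTheory Set Topology Filter

private lemma left_le_aux {f : ℝ → ℝ} {b t₀ : ℝ} (hf : ContinuousOn f (Icc 0 b)) (h0 : 0 < t₀)
    (ht : t₀ ∈ Icc (0:ℝ) b) (hle : ∀ s ∈ Ico (0:ℝ) t₀, f s ≤ 0) : f t₀ ≤ 0 := by
  have hsub : Ico (0:ℝ) t₀ ⊆ Icc 0 b := fun s hs => ⟨hs.1, hs.2.le.trans ht.2⟩
  have hc : ContinuousWithinAt f (Ico 0 t₀) t₀ := (hf t₀ ht).mono hsub
  have hne : (𝓝[Ico (0:ℝ) t₀] t₀).NeBot := by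
    rw [← mem_closure_iff_nhdsWithin_neBot, closure_Ico h0.ne]
    exact ⟨h0.le, le_refl _⟩
  exact le_of_tendsto hc (eventually_nhdsWithin_of_forall hle)

private lemma rpow_lip {a m M x x' : ℝ} (ha : 0 ≤ a) (hm : 0 < m)
    (h1 : m ≤ x) (h2 : x ≤ x') (h3 : x' ≤ M) :
    x' ^ a ≤ x ^ a + a * M ^ a / m * (x' - x) := by
  rcases eq_or_lt_of_le h2 with rfl | hlt
  · simp
  have hx0 : 0 < x := hm.trans_le h1
  have hcont : ContinuousOn (fun t : ℝ => t ^ a) (Icc x x') := by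
    apply ContinuousOn.rpow_const continuousOn_id
    intro t ht
    exact Or.inl (ne_of_gt (hx0.trans_le ht.1))
  obtain ⟨c, hc, hslope⟩ := exists_hasDerivAt_eq_slope (fun t : ℝ => t ^ a)
      (fun t => a * t ^ (a - 1)) hlt hcont
      (fun t ht => Real.hasDerivAt_rpow_const (Or.inl (ne_of_gt (hx0.trans ht.1))))
  have hc0 : 0 < c := hx0.trans hc.1
  have hcM : c ≤ M := hc.2.le.trans h3
  have key : c ^ (a - 1) ≤ M ^ a / m := by
    have hrw : c ^ (a - 1) = c ^ a / c := by
      rw [Real.rpow_sub hc0, Real.rpow_one]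
    rw [hrw]
    exact div_le_div₀ (Real.rpow_nonneg (hm.le.trans (h1.trans (h2.trans h3))) a)
      (Real.rpow_le_rpow hc0.le hcM ha) hm (h1.trans hc.1.le)

  rw [eq_div_iff (by linarith : x' - x ≠ 0)] at hslope
  have h4 : a * c ^ (a - 1) * (x' - x) ≤ a * (M ^ a / m) * (x' - x) :=
    mul_le_mul_of_nonneg_right (mul_le_mul_of_nonneg_left key ha) (by linarith)
  rw [mul_div_assoc]
  linarith

private lemma prod_bound {a b m M yi yj ui uj zi zj : ℝ}
    (ha : 0 ≤ a) (hb : 0 ≤ b) (hm : 0 < m)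
    (hyi : yi ∈ Icc m M) (hyj : yj ∈ Icc m M)
    (hui : ui ∈ Icc (0:ℝ) 1) (huj : uj ∈ Icc (0:ℝ) 1)
    (hzi : 0 ≤ zi) (hzi' : zi ≤ yi + ui) (hzj : 0 ≤ zj) (hzj' : zj ≤ yj + uj) :
    zi ^ a * zj ^ b ≤ yi ^ a * yj ^ b +
      ((M+1)^a * (b * (M+1)^b / m) + (a * (M+1)^a / m) * (M+1)^b
        + (a * (M+1)^a / m) * (b * (M+1)^b / m)) * (ui + uj) := by
  set La := a * (M+1)^a / m with hLa
  set Lb := b * (M+1)^b / m with hLb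
  have hM1 : (0:ℝ) ≤ M + 1 := by nlinarith [hm.le.trans (hyi.1.trans hyi.2)]
  have hLa0 : 0 ≤ La := by
    apply div_nonneg (mul_nonneg ha (Real.rpow_nonneg hM1 a)) hm.le
  have hLb0 : 0 ≤ Lb := by
    apply div_nonneg (mul_nonneg hb (Real.rpow_nonneg hM1 b)) hm.le
  have f1 : zi ^ a ≤ (yi + ui) ^ a := Real.rpow_le_rpow hzi hzi' ha
  have f2 : (yi + ui) ^ a ≤ yi ^ a + La * ui := by
    have := rpow_lip ha hm hyi.1 (le_add_of_nonneg_right hui.1)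
      (by linarith [hyi.2, hui.2] : yi + ui ≤ M + 1)
    simpa using this
  have f3 : zj ^ b ≤ (yj + uj) ^ b := Real.rpow_le_rpow hzj hzj' hb
  have f4 : (yj + uj) ^ b ≤ yj ^ b + Lb * uj := by
    have := rpow_lip hb hm hyj.1 (le_add_of_nonneg_right huj.1)
      (by linarith [hyj.2, huj.2] : yj + uj ≤ M + 1)
    simpa using this
  have g1 : (0:ℝ) ≤ yi ^ a := Real.rpow_nonneg (hm.le.trans hyi.1) a
  have g2 : (0:ℝ) ≤ yj ^ b := Real.rpow_nonneg (hm.le.trans hyj.1) b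
  have g3 : yi ^ a ≤ (M+1) ^ a := Real.rpow_le_rpow (hm.le.trans hyi.1) (by linarith [hyi.2]) ha
  have g4 : yj ^ b ≤ (M+1) ^ b := Real.rpow_le_rpow (hm.le.trans hyj.1) (by linarith [hyj.2]) hb
  have step : zi ^ a * zj ^ b ≤ (yi ^ a + La * ui) * (yj ^ b + Lb * uj) := by
    apply mul_le_mul (f1.trans f2) (f3.trans f4)
      (Real.rpow_nonneg hzj b) (add_nonneg g1 (mul_nonneg hLa0 hui.1))
  have hMa : (0:ℝ) ≤ (M+1)^a := Real.rpow_nonneg hM1 a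
  have hMb : (0:ℝ) ≤ (M+1)^b := Real.rpow_nonneg hM1 b
  have k1 : yi^a * (Lb*uj) ≤ (M+1)^a * (Lb*uj) :=
    mul_le_mul_of_nonneg_right g3 (mul_nonneg hLb0 huj.1)
  have k2 : (La*ui) * yj^b ≤ (La*ui) * (M+1)^b :=
    mul_le_mul_of_nonneg_left g4 (mul_nonneg hLa0 hui.1)
  have k3 : (La*ui) * (Lb*uj) ≤ (La*ui) * Lb := by
    calc (La*ui) * (Lb*uj) = (La*ui*Lb) * uj := by ring
    _ ≤ (La*ui*Lb) * 1 := mul_le_mul_of_nonneg_left huj.2 (mul_nonneg (mul_nonneg hLa0 hui.1) hLb0)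
    _ = (La*ui) * Lb := by ring
  have k4 : (0:ℝ) ≤ (M+1)^a * (Lb*ui) := mul_nonneg hMa (mul_nonneg hLb0 hui.1)
  have k5 : (0:ℝ) ≤ (La*uj) * (M+1)^b := mul_nonneg (mul_nonneg hLa0 huj.1) hMb
  have k6 : (0:ℝ) ≤ (La*Lb) * uj := mul_nonneg (mul_nonneg hLa0 hLb0) huj.1
  nlinarith [step, k1, k2, k3, k4, k5, k6]

/-- comparison theorem (Theorem 3.1 of the paper), `≤` case.
If `(y₁,y₂)` is a positive differentiable solution of the ODE system on `[0,τ)`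
(with `0 < τ ≤ ∞`, encoded via `τ : EReal`), and `z₁,z₂` are nonnegative
measurable functions satisfying the corresponding reverse integral inequalities with the
same initial values, then `zᵢ(t) ≤ yᵢ(t)` on `[0,τ)`. -/
theorem statement3 (p : Fin 2 → Fin 2 → ℝ) (hp : ∀ i j, 0 ≤ p i j)
    (h : Fin 2 → ℝ → ℝ)
    (hhc : ∀ i, ContinuousOn (h i) (Ici 0))
    (hhp : ∀ i, ∀ t : ℝ, 0 ≤ t → 0 < h i t)
    (τ : EReal) (hτ : 0 < τ)
    (y : Fin 2 → ℝ → ℝ)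
    (hy0 : ∀ i, 0 < y i 0)
    (hypos : ∀ i, ∀ t : ℝ, 0 ≤ t → (t : EReal) < τ → 0 < y i t)
    (hyd : ∀ i, ∀ t : ℝ, 0 ≤ t → (t : EReal) < τ →
      HasDerivWithinAt (y i)
        (h i t * y i t ^ p i i * y (1 - i) t ^ p i (1 - i))
        {s : ℝ | 0 ≤ s ∧ (s : EReal) < τ} t)
    (z : Fin 2 → ℝ → ℝ)
    (hzm : ∀ i, Measurable (z i))
    (hznn : ∀ i, ∀ t : ℝ, 0 ≤ z i t)
    (hzint : ∀ i, ∀ t : ℝ, 0 ≤ t → (t : EReal) < τ →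
      IntervalIntegrable
        (fun s => h i s * z i s ^ p i i * z (1 - i) s ^ p i (1 - i)) volume 0 t)
    (hz0 : ∀ i, z i 0 = y i 0)
    (hzle : ∀ i, ∀ t : ℝ, 0 ≤ t → (t : EReal) < τ →
      z i t ≤
        z i 0 + ∫ s in (0:ℝ)..t, h i s * z i s ^ p i i * z (1 - i) s ^ p i (1 - i)) :
    ∀ i, ∀ t : ℝ, 0 ≤ t → (t : EReal) < τ → z i t ≤ y i t := by
  intro i₀ b hb0 hbτ
  -- membership in the domain set
  set S : Set ℝ := {s : ℝ | 0 ≤ s ∧ (s : EReal) < τ} with hSdef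
  have hmemS : ∀ s : ℝ, 0 ≤ s → s ≤ b → s ∈ S := fun s h1 h2 =>
    ⟨h1, lt_of_le_of_lt (EReal.coe_le_coe_iff.2 h2) hbτ⟩
  -- abbreviations
  set g : Fin 2 → ℝ → ℝ :=
    fun i s => h i s * z i s ^ p i i * z (1-i) s ^ p i (1-i) with hgdef
  set G : Fin 2 → ℝ → ℝ :=
    fun i s => h i s * y i s ^ p i i * y (1-i) s ^ p i (1-i) with hGdef
  set w : Fin 2 → ℝ → ℝ := fun i t => z i 0 + ∫ s in (0:ℝ)..t, g i s with hwdef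
  set d : Fin 2 → ℝ → ℝ := fun i t => w i t - y i t with hddef
  set u : Fin 2 → ℝ → ℝ := fun i t => max (d i t) 0 with hudef
  set v : ℝ → ℝ := fun t => u 0 t + u 1 t with hvdef
  have hunn : ∀ i t, 0 ≤ u i t := fun i t => le_max_right _ _
  have hvnn : ∀ t, 0 ≤ v t := fun t => add_nonneg (hunn 0 t) (hunn 1 t)
  have hdu : ∀ i t, d i t ≤ u i t := fun i t => le_max_left _ _
  have huv : ∀ i t, u i t ≤ v t := by
    intro i t
    fin_cases i
    · exact le_add_of_nonneg_right (hunn 1 t)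
    · exact le_add_of_nonneg_left (hunn 0 t)
  -- basic integrability / continuity
  have hgint0 : ∀ i, ∀ t : ℝ, 0 ≤ t → t ≤ b → IntervalIntegrable (g i) volume 0 t :=
    fun i t h1 h2 => hzint i t h1 (lt_of_le_of_lt (EReal.coe_le_coe_iff.2 h2) hbτ)
  have hgint : ∀ i, ∀ s t : ℝ, 0 ≤ s → s ≤ t → t ≤ b →
      IntervalIntegrable (g i) volume s t := by
    intro i s t h1 h2 h3
    refine (hgint0 i t (h1.trans h2) h3).mono_set ?_
    rw [uIcc_of_le h2, uIcc_of_le (h1.trans h2)]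
    exact Icc_subset_Icc h1 le_rfl
  have hzw : ∀ i, ∀ s : ℝ, 0 ≤ s → s ≤ b → z i s ≤ w i s := by
    intro i s h1 h2
    exact hzle i s h1 (lt_of_le_of_lt (EReal.coe_le_coe_iff.2 h2) hbτ)
  have hIccS : Icc (0:ℝ) b ⊆ S := fun s hs => hmemS s hs.1 hs.2
  have hycont : ∀ i, ContinuousOn (y i) (Icc 0 b) := by
    intro i
    refine ContinuousOn.mono (fun t ht => ?_) hIccS
    exact (hyd i t ht.1 ht.2).continuousWithinAt
  have hypos' : ∀ i, ∀ s : ℝ, s ∈ Icc 0 b → 0 < y i s :=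
    fun i s hs => hypos i s hs.1 (hIccS hs).2
  have hGcont : ∀ i, ContinuousOn (G i) (Icc 0 b) := by
    intro i
    refine ContinuousOn.mul (ContinuousOn.mul ((hhc i).mono (fun s hs => hs.1)) ?_) ?_
    · exact (hycont i).rpow_const (fun s hs => Or.inl (ne_of_gt (hypos' i s hs)))
    · exact (hycont (1-i)).rpow_const (fun s hs => Or.inl (ne_of_gt (hypos' (1-i) s hs)))
  have hGint : ∀ i, ∀ s t : ℝ, 0 ≤ s → t ≤ b → s ≤ t →
      IntervalIntegrable (G i) volume s t := by
    intro i s t h1 h2 h3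
    apply ContinuousOn.intervalIntegrable
    refine (hGcont i).mono ?_
    rw [uIcc_of_le h3]
    exact Icc_subset_Icc h1 h2
  have hwcont : ∀ i, ContinuousOn (w i) (Icc 0 b) := by
    intro i
    apply ContinuousOn.add continuousOn_const
    have hio : IntegrableOn (g i) (uIcc 0 b) volume := by
      rw [uIcc_of_le hb0]
      exact (intervalIntegrable_iff_integrableOn_Icc_of_le hb0).mp (hgint0 i b hb0 le_rfl)
    have := intervalIntegral.continuousOn_primitive_interval (μ := volume) hio
    rwa [uIcc_of_le hb0] at this
  have hdcont : ∀ i, ContinuousOn (d i) (Icc 0 b) :=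
    fun i => (hwcont i).sub (hycont i)
  have hucont : ∀ i, ContinuousOn (u i) (Icc 0 b) :=
    fun i => (hdcont i).sup continuousOn_const
  have hvcont : ContinuousOn v (Icc 0 b) := (hucont 0).add (hucont 1)
  -- FTC for y
  have hFTC : ∀ i, ∀ s t : ℝ, 0 ≤ s → s ≤ t → t ≤ b →
      ∫ x in s..t, G i x = y i t - y i s := by
    intro i s t h1 h2 h3
    refine intervalIntegral.integral_eq_sub_of_hasDeriv_right_of_le h2
      ((hycont i).mono (Icc_subset_Icc h1 h3)) (fun x hx => ?_) (hGint i s t h1 h3 h2)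
    have hx0 : 0 ≤ x := h1.trans hx.1.le
    have hxb : x < b := lt_of_lt_of_le hx.2 h3
    have hd := hyd i x hx0 (lt_of_le_of_lt (EReal.coe_le_coe_iff.2 hxb.le) hbτ)
    refine HasDerivWithinAt.mono_of_mem_nhdsWithin hd ?_
    refine mem_of_superset (Ioo_mem_nhdsGT_of_mem ⟨le_refl x, hxb⟩) ?_
    exact fun r hr => hmemS r (hx0.trans hr.1.le) hr.2.le
  -- compactness constants
  have hne : (Icc (0:ℝ) b).Nonempty := ⟨0, le_refl _, hb0⟩
  obtain ⟨x0, hx0mem, hx0min⟩ := isCompact_Icc.exists_isMinOn hne (hycont 0)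
  obtain ⟨x1, hx1mem, hx1min⟩ := isCompact_Icc.exists_isMinOn hne (hycont 1)
  obtain ⟨X0, hX0mem, hX0max⟩ := isCompact_Icc.exists_isMaxOn hne (hycont 0)
  obtain ⟨X1, hX1mem, hX1max⟩ := isCompact_Icc.exists_isMaxOn hne (hycont 1)
  obtain ⟨e0, he0mem, he0max⟩ := isCompact_Icc.exists_isMaxOn hne
    ((hhc 0).mono (fun s hs => hs.1))
  obtain ⟨e1, he1mem, he1max⟩ := isCompact_Icc.exists_isMaxOn hne
    ((hhc 1).mono (fun s hs => hs.1))
  set m : ℝ := min (y 0 x0) (y 1 x1) with hmdef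
  set M : ℝ := max (y 0 X0) (y 1 X1) with hMdef
  set H : ℝ := max (h 0 e0) (h 1 e1) with hHdef
  have hm0 : 0 < m := lt_min (hypos' 0 x0 hx0mem) (hypos' 1 x1 hx1mem)
  have hmy : ∀ i, ∀ s, s ∈ Icc (0:ℝ) b → m ≤ y i s := by
    intro i s hs
    fin_cases i
    · exact le_trans (min_le_left _ _) (isMinOn_iff.mp hx0min s hs)
    · exact le_trans (min_le_right _ _) (isMinOn_iff.mp hx1min s hs)
  have hyM : ∀ i, ∀ s, s ∈ Icc (0:ℝ) b → y i s ≤ M := by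
    intro i s hs
    fin_cases i
    · exact le_trans (isMaxOn_iff.mp hX0max s hs) (le_max_left _ _)
    · exact le_trans (isMaxOn_iff.mp hX1max s hs) (le_max_right _ _)
  have hhH : ∀ i, ∀ s, s ∈ Icc (0:ℝ) b → h i s ≤ H := by
    intro i s hs
    fin_cases i
    · exact le_trans (isMaxOn_iff.mp he0max s hs) (le_max_left _ _)
    · exact le_trans (isMaxOn_iff.mp he1max s hs) (le_max_right _ _)
  have hH0 : 0 ≤ H := le_trans (hhp 0 e0 he0mem.1).le (le_max_left _ _)
  have hM1 : 0 ≤ M + 1 := by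
    have := lt_of_lt_of_le (hypos' 0 X0 hX0mem) (hyM 0 X0 hX0mem)
    linarith
  set L : ℝ → ℝ := fun e => e * (M+1) ^ e / m with hLdef
  set C : Fin 2 → ℝ := fun i => (M+1)^(p i i) * L (p i (1-i)) + L (p i i) * (M+1)^(p i (1-i))
    + L (p i i) * L (p i (1-i)) with hCdef
  have hL0 : ∀ e, 0 ≤ e → 0 ≤ L e := fun e he =>
    div_nonneg (mul_nonneg he (Real.rpow_nonneg hM1 e)) hm0.le
  have hC0 : ∀ i, 0 ≤ C i := by
    intro i
    have h1 := hL0 _ (hp i i)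
    have h2 := hL0 _ (hp i (1-i))
    have h3 : (0:ℝ) ≤ (M+1)^(p i i) := Real.rpow_nonneg hM1 _
    have h4 : (0:ℝ) ≤ (M+1)^(p i (1-i)) := Real.rpow_nonneg hM1 _
    have := mul_nonneg h3 h2
    have := mul_nonneg h1 h4
    have := mul_nonneg h1 h2
    simp only [hCdef]
    positivity
  set K : ℝ := H * max (C 0) (C 1) with hKdef
  have hK0 : 0 ≤ K := mul_nonneg hH0 (le_trans (hC0 0) (le_max_left _ _))
  -- the key claim
  have key : ∀ t ∈ Icc (0:ℝ) b, ∀ i, d i t ≤ 0 := by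
    by_contra hcon
    push_neg at hcon
    obtain ⟨s₀, hs₀mem, i₁, hs₀⟩ := hcon
    set B : Set ℝ := {s | s ∈ Icc (0:ℝ) b ∧ ∃ i, 0 < d i s} with hBdef
    have hBne : B.Nonempty := ⟨s₀, hs₀mem, i₁, hs₀⟩
    have hBbdd : BddBelow B := ⟨0, fun x hx => hx.1.1⟩
    set t₀ : ℝ := sInf B with ht₀def
    have ht₀mem : t₀ ∈ Icc (0:ℝ) b := by
      constructor
      · exact le_csInf hBne (fun x hx => hx.1.1)
      · exact le_trans (csInf_le hBbdd ⟨hs₀mem, i₁, hs₀⟩) hs₀mem.2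
    have hd00 : ∀ i, d i 0 = 0 := by
      intro i
      simp only [hddef, hwdef, intervalIntegral.integral_same, add_zero, hz0 i, sub_self]
    have hbefore : ∀ s : ℝ, 0 ≤ s → s < t₀ → ∀ i, d i s ≤ 0 := by
      intro s h1 h2 i
      by_contra hlt
      push_neg at hlt
      have hsB : s ∈ B := ⟨⟨h1, h2.le.trans ht₀mem.2⟩, i, hlt⟩
      exact absurd (csInf_le hBbdd hsB) (not_le.mpr h2)
    have hdt₀ : ∀ i, d i t₀ ≤ 0 := by
      intro i
      rcases eq_or_lt_of_le ht₀mem.1 with heq | hpos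
      · rw [← heq]; exact (hd00 i).le
      · exact left_le_aux (hdcont i) hpos ht₀mem
          (fun s hs => hbefore s hs.1 hs.2 i)
    have ht₀b : t₀ < b := by
      rcases lt_or_eq_of_le ht₀mem.2 with hlt | heq
      · exact hlt
      · exfalso
        have hs₀t₀ : t₀ ≤ s₀ := csInf_le hBbdd ⟨hs₀mem, i₁, hs₀⟩
        have : s₀ = t₀ := le_antisymm (heq ▸ hs₀mem.2) hs₀t₀
        rw [this] at hs₀
        exact absurd hs₀ (not_lt.mpr (hdt₀ i₁))
    -- find δ with d i < 1 near t₀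
    have hev : ∀ᶠ s in 𝓝[Icc (0:ℝ) b] t₀, (d 0 s < 1 ∧ d 1 s < 1) := by
      have h0' : Tendsto (d 0) (𝓝[Icc (0:ℝ) b] t₀) (𝓝 (d 0 t₀)) := hdcont 0 t₀ ht₀mem
      have h1' : Tendsto (d 1) (𝓝[Icc (0:ℝ) b] t₀) (𝓝 (d 1 t₀)) := hdcont 1 t₀ ht₀mem
      have e0' : ∀ᶠ s in 𝓝[Icc (0:ℝ) b] t₀, d 0 s < 1 :=
        h0' (Iio_mem_nhds (lt_of_le_of_lt (hdt₀ 0) one_pos))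
      have e1' : ∀ᶠ s in 𝓝[Icc (0:ℝ) b] t₀, d 1 s < 1 :=
        h1' (Iio_mem_nhds (lt_of_le_of_lt (hdt₀ 1) one_pos))
      exact e0'.and e1'
    have hmem' : {s : ℝ | d 0 s < 1 ∧ d 1 s < 1} ∈ 𝓝[Icc (0:ℝ) b] t₀ := hev
    rw [Metric.mem_nhdsWithin_iff] at hmem'
    obtain ⟨δ, hδ0, hδ⟩ := hmem'
    set t₁ : ℝ := min (t₀ + δ/2) b with ht₁def
    have ht₀t₁ : t₀ < t₁ := lt_min (by linarith) ht₀b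
    have ht₁b : t₁ ≤ b := min_le_right _ _
    have hIcc01 : Icc t₀ t₁ ⊆ Icc (0:ℝ) b :=
      Icc_subset_Icc ht₀mem.1 ht₁b
    have hdsmall : ∀ s ∈ Icc t₀ t₁, ∀ i, d i s < 1 := by
      intro s hs i
      have hdist : dist s t₀ < δ := by
        rw [Real.dist_eq, abs_of_nonneg (by linarith [hs.1])]
        have : s ≤ t₀ + δ/2 := hs.2.trans (min_le_left _ _)
        linarith
      have := hδ ⟨Metric.mem_ball.mpr hdist, hIcc01 hs⟩
      fin_cases i
      · exact this.1
      · exact this.2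
    have husmall : ∀ s ∈ Icc t₀ t₁, ∀ i, u i s ≤ 1 := fun s hs i =>
      max_le (hdsmall s hs i).le zero_le_one
    -- pointwise inequality
    have hpoint : ∀ s ∈ Icc t₀ t₁, ∀ i, g i s ≤ G i s + K * v s := by
      intro s hs i
      have hsmem : s ∈ Icc (0:ℝ) b := hIcc01 hs
      have hs0 : 0 ≤ s := hsmem.1
      have core : z i s ^ (p i i) * z (1-i) s ^ (p i (1-i)) ≤
          y i s ^ (p i i) * y (1-i) s ^ (p i (1-i)) + C i * (u i s + u (1-i) s) := by
        refine prod_bound (hp i i) (hp i (1-i)) hm0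
          ⟨hmy i s hsmem, hyM i s hsmem⟩ ⟨hmy (1-i) s hsmem, hyM (1-i) s hsmem⟩
          ⟨hunn i s, husmall s hs i⟩ ⟨hunn (1-i) s, husmall s hs (1-i)⟩
          (hznn i s) ?_ (hznn (1-i) s) ?_
        · calc z i s ≤ w i s := hzw i s hs0 hsmem.2
            _ = y i s + d i s := by simp only [hddef]; ring
            _ ≤ y i s + u i s := by linarith [hdu i s]
        · calc z (1-i) s ≤ w (1-i) s := hzw (1-i) s hs0 hsmem.2
            _ = y (1-i) s + d (1-i) s := by simp only [hddef]; ring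
            _ ≤ y (1-i) s + u (1-i) s := by linarith [hdu (1-i) s]
      have hsum : u i s + u (1-i) s = v s := by
        fin_cases i
        · rfl
        · exact add_comm _ _
      rw [hsum] at core
      have hhnn : 0 ≤ h i s := (hhp i s hs0).le
      have hCv : 0 ≤ C i * v s := mul_nonneg (hC0 i) (hvnn s)
      calc g i s = h i s * (z i s ^ (p i i) * z (1-i) s ^ (p i (1-i))) := by
            simp only [hgdef]; ring
        _ ≤ h i s * (y i s ^ (p i i) * y (1-i) s ^ (p i (1-i)) + C i * v s) :=
            mul_le_mul_of_nonneg_left core hhnn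
        _ = G i s + h i s * (C i * v s) := by simp only [hGdef]; ring
        _ ≤ G i s + H * (C i * v s) := by
            have := mul_le_mul_of_nonneg_right (hhH i s hsmem) hCv
            linarith
        _ ≤ G i s + K * v s := by
            have h1 : C i ≤ max (C 0) (C 1) := by
              fin_cases i
              · exact le_max_left _ _
              · exact le_max_right _ _
            have h2 : H * (C i * v s) ≤ H * (max (C 0) (C 1) * v s) :=
              mul_le_mul_of_nonneg_left
                (mul_le_mul_of_nonneg_right h1 (hvnn s)) hH0
            simp only [hKdef]
            linarith [h2]
    -- interval-integral estimate
    have hest : ∀ t ∈ Icc t₀ t₁, ∀ i, d i t ≤ K * ∫ s in t₀..t, v s := by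
      intro t ht i
      have ht0b : t ≤ b := ht.2.trans ht₁b
      have h0t₀ : 0 ≤ t₀ := ht₀mem.1
      have h0t : 0 ≤ t := h0t₀.trans ht.1
      have hvint : IntervalIntegrable v volume t₀ t := by
        apply ContinuousOn.intervalIntegrable
        refine hvcont.mono ?_
        rw [uIcc_of_le ht.1]
        exact Icc_subset_Icc h0t₀ ht0b
      have hsplit : ∫ s in (0:ℝ)..t, g i s =
          (∫ s in (0:ℝ)..t₀, g i s) + ∫ s in t₀..t, g i s :=
        (intervalIntegral.integral_add_adjacent_intervals
          (hgint i 0 t₀ le_rfl h0t₀ ht₀mem.2) (hgint i t₀ t h0t₀ ht.1 ht0b)).symm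
      have hwdiff : w i t - w i t₀ = ∫ s in t₀..t, g i s := by
        simp only [hwdef, hsplit]; ring
      have hydiff : y i t - y i t₀ = ∫ s in t₀..t, G i s :=
        (hFTC i t₀ t h0t₀ ht.1 ht0b).symm
      have hmono : (∫ s in t₀..t, g i s) ≤ ∫ s in t₀..t, G i s + K * v s := by
        apply intervalIntegral.integral_mono_on ht.1
          (hgint i t₀ t h0t₀ ht.1 ht0b)
          ((hGint i t₀ t h0t₀ ht0b ht.1).add (hvint.const_mul K))
        intro x hx
        exact hpoint x ⟨hx.1, hx.2.trans ht.2⟩ i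
      have hadd : (∫ s in t₀..t, G i s + K * v s) =
          (∫ s in t₀..t, G i s) + K * ∫ s in t₀..t, v s := by
        rw [intervalIntegral.integral_add (hGint i t₀ t h0t₀ ht0b ht.1)
          (hvint.const_mul K), intervalIntegral.integral_const_mul]
      have : d i t = d i t₀ + ((∫ s in t₀..t, g i s) - ∫ s in t₀..t, G i s) := by
        simp only [hddef]
        rw [← hwdiff, ← hydiff]; ring
      rw [this]
      have := hdt₀ i
      have h5 : (∫ s in t₀..t, g i s) - (∫ s in t₀..t, G i s) ≤ K * ∫ s in t₀..t, v s := by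
        have := hmono.trans_eq hadd
        linarith
      linarith
    have hVnn : ∀ t ∈ Icc t₀ t₁, 0 ≤ K * ∫ s in t₀..t, v s := by
      intro t ht
      refine mul_nonneg hK0 (intervalIntegral.integral_nonneg ht.1 (fun x _ => hvnn x))
    have hvest : ∀ t ∈ Icc t₀ t₁, v t ≤ 2 * K * ∫ s in t₀..t, v s := by
      intro t ht
      have h0' : u 0 t ≤ K * ∫ s in t₀..t, v s := max_le (hest t ht 0) (hVnn t ht)
      have h1' : u 1 t ≤ K * ∫ s in t₀..t, v s := max_le (hest t ht 1) (hVnn t ht)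
      simp only [hvdef]
      linarith
    -- Gronwall via clamped v
    set cl : ℝ → ℝ := fun s => max 0 (min s b) with hcldef
    have hclcont : Continuous cl :=
      continuous_const.max (continuous_id.min continuous_const)
    have hclmem : ∀ s, cl s ∈ Icc (0:ℝ) b :=
      fun s => ⟨le_max_left _ _, max_le hb0 (min_le_right _ _)⟩
    set vb : ℝ → ℝ := fun s => v (cl s) with hvbdef
    have hvbcont : Continuous vb := hvcont.comp_continuous hclcont hclmem
    have hvbeq : ∀ s ∈ Icc (0:ℝ) b, vb s = v s := by
      intro s hs
      simp only [hvbdef, hcldef, min_eq_left hs.2, max_eq_right hs.1]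
    set V : ℝ → ℝ := fun t => ∫ s in t₀..t, vb s with hVdef
    have hVd : ∀ x : ℝ, HasDerivAt V (vb x) x := by
      intro x
      exact intervalIntegral.integral_hasDerivAt_right
        (hvbcont.intervalIntegrable _ _)
        (hvbcont.stronglyMeasurableAtFilter _ _)
        hvbcont.continuousAt
    have hVcont : Continuous V := by
      rw [continuous_iff_continuousAt]
      exact fun x => (hVd x).continuousAt
    have hVeq : ∀ x ∈ Icc t₀ t₁, V x = ∫ s in t₀..x, v s := by
      intro x hx
      apply intervalIntegral.integral_congr
      intro s hs
      apply hvbeq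
      rw [uIcc_of_le hx.1] at hs
      exact hIcc01 ⟨hs.1, hs.2.trans hx.2⟩
    have hbound : ∀ x ∈ Ico t₀ t₁, ‖vb x‖ ≤ 2 * K * ‖V x‖ + 0 := by
      intro x hx
      have hx' : x ∈ Icc t₀ t₁ := ⟨hx.1, hx.2.le⟩
      rw [hvbeq x (hIcc01 hx'), Real.norm_eq_abs, abs_of_nonneg (hvnn x), add_zero]
      calc v x ≤ 2 * K * ∫ s in t₀..x, v s := hvest x hx'
        _ = 2 * K * V x := by rw [hVeq x hx']
        _ ≤ 2 * K * ‖V x‖ := by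
            apply mul_le_mul_of_nonneg_left (le_abs_self _) (by linarith)
    have hgron := norm_le_gronwallBound_of_norm_deriv_right_le
      (f := V) (f' := vb) (δ := 0) (K := 2*K) (ε := 0) (a := t₀) (b := t₁)
      hVcont.continuousOn (fun x _ => (hVd x).hasDerivWithinAt)
      (by simp [hVdef]) hbound
    have hV0 : ∀ x ∈ Icc t₀ t₁, V x = 0 := by
      intro x hx
      have := hgron x hx
      rw [gronwallBound_ε0_δ0] at this
      exact norm_le_zero_iff.mp this
    have hdone : ∀ x ∈ Icc t₀ t₁, ∀ i, d i x ≤ 0 := by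
      intro x hx i
      have hv0 : v x ≤ 0 := by
        have := hvest x hx
        rw [← hVeq x hx, hV0 x hx] at this
        linarith
      exact le_trans (hdu i x) (le_trans (huv i x) hv0)
    -- contradiction: t₁ is a lower bound for B
    have hlb : ∀ x ∈ B, t₁ ≤ x := by
      intro x hx
      by_contra hxt
      push_neg at hxt
      have hxt₀ : t₀ ≤ x := csInf_le hBbdd hx
      obtain ⟨i, hi⟩ := hx.2
      exact absurd hi (not_lt.mpr (hdone x ⟨hxt₀, hxt.le⟩ i))
    have : t₁ ≤ t₀ := le_csInf hBne hlb
    linarith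
  -- conclude
  have h1 : z i₀ b ≤ w i₀ b := hzw i₀ b hb0 le_rfl
  have h2 : d i₀ b ≤ 0 := key b ⟨hb0, le_rfl⟩ i₀
  simp only [hddef] at h2
  linarith
end

section
/- Suppose h₁ ≡ c̃₁ and h₂ ≡ c̃₂ are positive constant functions, and let y₁⁰, y₂⁰ > 0. If p₁₁ > 1, or p₂₂ > 1, or (p₁₁−1)·(p₂₂−1) − p₁₂·p₂₁ < 0, then the ODE system has no global positive solution with these initial values: there is no pair of differentiable functions y₁, y₂ : [0,∞) → (0,∞) with y₁(0) = y₁⁰ and y₂(0) = y₂⁰ satisfying y₁'(t) = c̃₁·y₁(t)^{p₁₁}·y₂(t)^{p₁₂} and y₂'(t) = c̃₂·y₂(t)^{p₂₂}·y₁(t)^{p₂₁} for all t ≥ 0. -/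
open Set

/-!
If `y > 0` and `y' ≥ c y^p` with `c > 0`, `p > 1`, then `y^(1-p)/(1-p) - c t` is nondecreasing,
which forces `y^(1-p)` to become negative in finite time. When `p₁₁ > 1` the first equation has
this form, since `y₂` is nondecreasing; symmetrically when `p₂₂ > 1`. Otherwise the product
`P = y₁ y₂` satisfies `P' = c₁ y₁^p₁₁ y₂^(p₁₂+1) + c₂ y₁^(p₂₁+1) y₂^p₂₂`, and weighted AM-GM with
a suitable weight `θ` bounds the right-hand side below by `min c₁ c₂ · P^(1+ν)` with `ν > 0`.
-/

theorem Convex.monotoneOn_of_hasDerivWithinAt_nonneg {D : Set ℝ} (hD : Convex ℝ D)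
    {f f' : ℝ → ℝ} (hf : ∀ x ∈ D, HasDerivWithinAt f (f' x) D x) (hf' : ∀ x ∈ D, 0 ≤ f' x) :
    MonotoneOn f D :=
  _root_.monotoneOn_of_hasDerivWithinAt_nonneg hD (fun x hx => (hf x hx).continuousWithinAt)
    (fun x hx => (hf x (interior_subset hx)).mono interior_subset)
    (fun x hx => hf' x (interior_subset hx))

theorem false_of_pos_of_mul_rpow_le_deriv {y y' : ℝ → ℝ} {c p : ℝ} (hc : 0 < c) (hp : 1 < p)
    (hy : ∀ t ≥ 0, 0 < y t) (hy' : ∀ t ≥ 0, HasDerivWithinAt y (y' t) (Ici 0) t)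
    (hle : ∀ t ≥ 0, c * y t ^ p ≤ y' t) : False := by
  have hp1 : 1 - p < 0 := by linarith
  have hderiv : ∀ t ≥ 0, HasDerivWithinAt (fun t => y t ^ (1 - p) / (1 - p) - c * t)
      (y' t * (1 - p) * y t ^ (1 - p - 1) / (1 - p) - c) (Ici 0) t := fun t ht =>
    (((hy' t ht).rpow_const (Or.inl (hy t ht).ne')).div_const _).sub
      ((hasDerivWithinAt_id t _).const_mul c |>.congr_deriv (mul_one c))
  have hmono := (convex_Ici 0).monotoneOn_of_hasDerivWithinAt_nonneg hderiv fun t ht => by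
    have hyp : 0 < y t ^ p := Real.rpow_pos_of_pos (hy t ht) p
    have hpow : y t ^ (1 - p - 1) = (y t ^ p)⁻¹ := by
      rw [show 1 - p - 1 = -p by ring, Real.rpow_neg (hy t ht).le]
    have hquot : y' t * (1 - p) * y t ^ (1 - p - 1) / (1 - p) = y' t / y t ^ p := by
      rw [hpow, mul_div_right_comm, mul_div_cancel_right₀ _ hp1.ne, div_eq_mul_inv]
    rw [hquot, sub_nonneg, le_div_iff₀ hyp]
    exact hle t ht
  set T := y 0 ^ (1 - p) / ((p - 1) * c)
  have hT : 0 ≤ T := by have := hy 0 le_rfl; positivity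
  have h := hmono self_mem_Ici hT hT
  have hyT : 0 < y T ^ (1 - p) := Real.rpow_pos_of_pos (hy T hT) _
  have hcT : c * T = -(y 0 ^ (1 - p) / (1 - p)) := by
    rw [mul_div_left_comm, div_mul_cancel_right₀ hc.ne', ← div_neg, neg_sub, div_eq_mul_inv]
  have hyT' : y T ^ (1 - p) / (1 - p) < 0 := div_neg_of_pos_of_neg hyT hp1
  simp only [mul_zero, sub_zero, hcT] at h
  linarith

theorem rpow_mul_rpow_le_weighted {x u θ a₁ a₂ b₁ b₂ : ℝ} (hx : 0 < x) (hu : 0 < u)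
    (hθ₀ : 0 ≤ θ) (hθ₁ : θ ≤ 1) :
    x ^ (θ * a₁ + (1 - θ) * a₂) * u ^ (θ * b₁ + (1 - θ) * b₂)
      ≤ θ * (x ^ a₁ * u ^ b₁) + (1 - θ) * (x ^ a₂ * u ^ b₂) := by
  convert Real.geom_mean_le_arith_mean2_weighted hθ₀ (sub_nonneg.2 hθ₁)
    (by positivity : 0 ≤ x ^ a₁ * u ^ b₁) (by positivity : 0 ≤ x ^ a₂ * u ^ b₂) (by ring) using 1
  rw [Real.mul_rpow (by positivity) (by positivity), Real.mul_rpow (by positivity) (by positivity),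
    ← Real.rpow_mul hx.le, ← Real.rpow_mul hx.le, ← Real.rpow_mul hu.le, ← Real.rpow_mul hu.le,
    Real.rpow_add hx, Real.rpow_add hu]
  ring_nf

theorem exists_weight_of_det_neg {p₁₁ p₁₂ p₂₁ p₂₂ : ℝ} (h₁₁ : p₁₁ ≤ 1) (h₂₂ : p₂₂ ≤ 1)
    (hp₁₂ : 0 ≤ p₁₂) (hp₂₁ : 0 ≤ p₂₁) (hdet : (p₁₁ - 1) * (p₂₂ - 1) - p₁₂ * p₂₁ < 0) :
    ∃ θ ν : ℝ, 0 ≤ θ ∧ θ ≤ 1 ∧ 0 < ν ∧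
      θ * p₁₁ + (1 - θ) * (p₂₁ + 1) = 1 + ν ∧ θ * (p₁₂ + 1) + (1 - θ) * p₂₂ = 1 + ν := by
  -- `(α, β) = -adj M (1, 1)` for `M = [[p₁₁ - 1, p₂₁], [p₁₂, p₂₂ - 1]]`, so `M (α, β) = -det M (1, 1)`
  set α := 1 - p₂₂ + p₂₁
  set β := 1 - p₁₁ + p₁₂
  have hα : 0 ≤ α := by simp only [α]; linarith
  have hβ : 0 ≤ β := by simp only [β]; linarith
  have hS : 0 < α + β := by
    by_contra! h
    nlinarith
  refine ⟨α / (α + β), -((p₁₁ - 1) * (p₂₂ - 1) - p₁₂ * p₂₁) / (α + β),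
    div_nonneg hα hS.le, (div_le_one hS).2 (by linarith), div_pos (by linarith) hS, ?_, ?_⟩ <;>
  · field_simp
    ring

section System

variable {p₁₁ p₁₂ p₂₁ p₂₂ c₁ c₂ : ℝ} {y₁ y₂ : ℝ → ℝ}

theorem false_of_one_lt_self_exponent (hp₁₂ : 0 ≤ p₁₂) (hc₁ : 0 < c₁) (hp₁₁ : 1 < p₁₁)
    (hy₁ : ∀ t ≥ 0, 0 < y₁ t) (hy₂ : ∀ t ≥ 0, 0 < y₂ t) (hy₂_mono : MonotoneOn y₂ (Ici 0))
    (hy₁' : ∀ t ≥ 0, HasDerivWithinAt y₁ (c₁ * y₁ t ^ p₁₁ * y₂ t ^ p₁₂) (Ici 0) t) : False := by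
  have hy₂0 := hy₂ 0 le_rfl
  refine false_of_pos_of_mul_rpow_le_deriv (c := c₁ * y₂ 0 ^ p₁₂) (by positivity) hp₁₁ hy₁ hy₁'
    fun t ht => ?_
  have hle : y₂ 0 ^ p₁₂ ≤ y₂ t ^ p₁₂ :=
    Real.rpow_le_rpow hy₂0.le (hy₂_mono self_mem_Ici ht ht) hp₁₂
  have := hy₁ t ht
  calc c₁ * y₂ 0 ^ p₁₂ * y₁ t ^ p₁₁ ≤ c₁ * y₂ t ^ p₁₂ * y₁ t ^ p₁₁ := by gcongr
    _ = c₁ * y₁ t ^ p₁₁ * y₂ t ^ p₁₂ := by ring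

theorem false_of_weighted_exponents (hc₁ : 0 < c₁) (hc₂ : 0 < c₂)
    (hy₁ : ∀ t ≥ 0, 0 < y₁ t) (hy₂ : ∀ t ≥ 0, 0 < y₂ t)
    (hy₁' : ∀ t ≥ 0, HasDerivWithinAt y₁ (c₁ * y₁ t ^ p₁₁ * y₂ t ^ p₁₂) (Ici 0) t)
    (hy₂' : ∀ t ≥ 0, HasDerivWithinAt y₂ (c₂ * y₂ t ^ p₂₂ * y₁ t ^ p₂₁) (Ici 0) t)
    {θ ν : ℝ} (hθ₀ : 0 ≤ θ) (hθ₁ : θ ≤ 1) (hν : 0 < ν)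
    (h₁ : θ * p₁₁ + (1 - θ) * (p₂₁ + 1) = 1 + ν) (h₂ : θ * (p₁₂ + 1) + (1 - θ) * p₂₂ = 1 + ν) :
    False := by
  refine false_of_pos_of_mul_rpow_le_deriv (lt_min hc₁ hc₂) (by linarith : 1 < 1 + ν)
    (fun t ht => mul_pos (hy₁ t ht) (hy₂ t ht)) (fun t ht => (hy₁' t ht).mul (hy₂' t ht))
    fun t ht => ?_
  have hx := hy₁ t ht
  have hu := hy₂ t ht
  have hamgm := rpow_mul_rpow_le_weighted hx hu hθ₀ hθ₁ (a₁ := p₁₁) (a₂ := p₂₁ + 1)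
    (b₁ := p₁₂ + 1) (b₂ := p₂₂)
  rw [h₁, h₂, ← Real.mul_rpow hx.le hu.le] at hamgm
  have hm₁ : 0 ≤ y₁ t ^ p₁₁ * y₂ t ^ (p₁₂ + 1) := by positivity
  have hm₂ : 0 ≤ y₁ t ^ (p₂₁ + 1) * y₂ t ^ p₂₂ := by positivity
  calc min c₁ c₂ * (y₁ t * y₂ t) ^ (1 + ν)
      ≤ min c₁ c₂ * (y₁ t ^ p₁₁ * y₂ t ^ (p₁₂ + 1) + y₁ t ^ (p₂₁ + 1) * y₂ t ^ p₂₂) := by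
        gcongr
        nlinarith
    _ ≤ c₁ * (y₁ t ^ p₁₁ * y₂ t ^ (p₁₂ + 1)) + c₂ * (y₁ t ^ (p₂₁ + 1) * y₂ t ^ p₂₂) := by
        rw [mul_add]
        gcongr
        exacts [min_le_left _ _, min_le_right _ _]
    _ = _ := by
        rw [Real.rpow_add_one hu.ne', Real.rpow_add_one hx.ne']
        ring

end System

theorem statement7_general (p11 p12 p21 p22 : ℝ)
    (hp12 : 0 ≤ p12) (hp21 : 0 ≤ p21)
    (c1 c2 : ℝ) (hc1 : 0 < c1) (hc2 : 0 < c2)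
    (y10 y20 : ℝ)
    (hcond : 1 < p11 ∨ 1 < p22 ∨ (p11 - 1) * (p22 - 1) - p12 * p21 < 0) :
    ¬ ∃ y1 y2 : ℝ → ℝ,
        y1 0 = y10 ∧ y2 0 = y20 ∧
        (∀ t : ℝ, 0 ≤ t → 0 < y1 t) ∧ (∀ t : ℝ, 0 ≤ t → 0 < y2 t) ∧
        (∀ t : ℝ, 0 ≤ t →
          HasDerivWithinAt y1 (c1 * y1 t ^ p11 * y2 t ^ p12) (Set.Ici 0) t) ∧
        (∀ t : ℝ, 0 ≤ t →
          HasDerivWithinAt y2 (c2 * y2 t ^ p22 * y1 t ^ p21) (Set.Ici 0) t) := by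
  rintro ⟨y1, y2, -, -, hy1, hy2, hy1', hy2'⟩
  have hmono1 : MonotoneOn y1 (Ici 0) :=
    (convex_Ici 0).monotoneOn_of_hasDerivWithinAt_nonneg hy1' fun t ht => by
      have := hy1 t ht; have := hy2 t ht; positivity
  have hmono2 : MonotoneOn y2 (Ici 0) :=
    (convex_Ici 0).monotoneOn_of_hasDerivWithinAt_nonneg hy2' fun t ht => by
      have := hy1 t ht; have := hy2 t ht; positivity
  rcases lt_or_ge 1 p11 with h11 | h11
  · exact false_of_one_lt_self_exponent hp12 hc1 h11 hy1 hy2 hmono2 hy1'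
  rcases lt_or_ge 1 p22 with h22 | h22
  · exact false_of_one_lt_self_exponent hp21 hc2 h22 hy2 hy1 hmono1 hy2'
  obtain ⟨θ, ν, hθ₀, hθ₁, hν, h₁, h₂⟩ := exists_weight_of_det_neg h11 h22 hp12 hp21
    ((hcond.resolve_left h11.not_gt).resolve_left h22.not_gt)
  exact false_of_weighted_exponents hc1 hc2 hy1 hy2 hy1' hy2' hθ₀ hθ₁ hν h₁ h₂

/-- blow-up criterion for the autonomous ODE system
(Corollary 1.4 of the paper). If `p₁₁ > 1`, or `p₂₂ > 1`, or
`(p₁₁-1)(p₂₂-1) - p₁₂p₂₁ < 0`, then the constant-coefficient ODE system has no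
global positive solution on `[0,∞)` with prescribed positive initial values. -/
theorem statement7 (p11 p12 p21 p22 : ℝ)
    (hp11 : 0 ≤ p11) (hp12 : 0 ≤ p12) (hp21 : 0 ≤ p21) (hp22 : 0 ≤ p22)
    (c1 c2 : ℝ) (hc1 : 0 < c1) (hc2 : 0 < c2)
    (y10 y20 : ℝ) (hy10 : 0 < y10) (hy20 : 0 < y20)
    (hcond : 1 < p11 ∨ 1 < p22 ∨ (p11 - 1) * (p22 - 1) - p12 * p21 < 0) :
    ¬ ∃ y1 y2 : ℝ → ℝ,
        y1 0 = y10 ∧ y2 0 = y20 ∧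
        (∀ t : ℝ, 0 ≤ t → 0 < y1 t) ∧ (∀ t : ℝ, 0 ≤ t → 0 < y2 t) ∧
        (∀ t : ℝ, 0 ≤ t →
          HasDerivWithinAt y1 (c1 * y1 t ^ p11 * y2 t ^ p12) (Set.Ici 0) t) ∧
        (∀ t : ℝ, 0 ≤ t →
          HasDerivWithinAt y2 (c2 * y2 t ^ p22 * y1 t ^ p21) (Set.Ici 0) t) :=
  statement7_general p11 p12 p21 p22 hp12 hp21 c1 c2 hc1 hc2 y10 y20 hcond
end

section
/- Assume h₁, h₂ are continuously differentiable and the quotient h̃₁ := h₁/h₂ has nonpositive derivative on [0,∞). Let (y₁,y₂) : [0,T) → (0,∞)² be a differentiable solution of the ODE system with y₁(0), y₂(0) > 0. If a₁ > 0 and a₂ = 0, then there exists a constant c > 0 such that y₁(t)^{a₁} ≥ c·(h₁(t)/h₂(t))·log(y₂(t)) for all t ∈ [0,T). -/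
/-! With `a₂ = 0`, i.e. `p₂₂ = p₁₂ + 1`, the function `L = y₁^{a₁} - c (h₁/h₂) log y₂` has
`L' = (a₁ - c) h₁ y₁^{p₂₁} y₂^{p₁₂} - c (h₁/h₂)' log y₂`, which is nonnegative wherever `y₂ > 1`
once `c ≤ a₁`. Shrinking `c` also gives `L(0) ≥ 0`, and `L ≥ 0` trivially where `y₂ ≤ 1`; hence
`L ≥ 0` everywhere, since `L` increases from the last time before `t` at which `y₂ ≤ 1`. -/

open Set Topology

theorem nonneg_of_hasDerivAt_nonneg_where_pos {L φ : ℝ → ℝ} {a b : ℝ} (hab : a ≤ b)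
    (hL : ContinuousOn L (Icc a b)) (hφ : ContinuousOn φ (Icc a b)) (ha : 0 ≤ L a)
    (hnonpos : ∀ u ∈ Icc a b, φ u ≤ 0 → 0 ≤ L u)
    (hderiv : ∀ u ∈ Ioo a b, 0 < φ u → ∃ D, HasDerivAt L D u ∧ 0 ≤ D) :
    0 ≤ L b := by
  -- From the last point `s` of `{a} ∪ {φ ≤ 0}`, `L` is nondecreasing up to `b`.
  set S : Set ℝ := insert a (Icc a b ∩ φ ⁻¹' Iic 0)
  have hS : IsCompact S := (isCompact_Icc.of_isClosed_subset
    (hφ.preimage_isClosed_of_isClosed isClosed_Icc isClosed_Iic) inter_subset_left).insert a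
  have hsS : sSup S ∈ S := hS.sSup_mem (insert_nonempty _ _)
  have has : a ≤ sSup S := le_csSup hS.bddAbove (mem_insert a _)
  obtain ⟨hsb, hLs⟩ : sSup S ≤ b ∧ 0 ≤ L (sSup S) := by
    rcases hsS with h | h
    · exact h ▸ ⟨hab, ha⟩
    · exact ⟨h.1.2, hnonpos _ h.1 h.2⟩
  have hpos : ∀ u ∈ Ioo (sSup S) b, 0 < φ u := fun u hu => by
    by_contra! h
    exact hu.1.not_ge (le_csSup hS.bddAbove (Or.inr ⟨⟨has.trans hu.1.le, hu.2.le⟩, h⟩))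
  have hmono : MonotoneOn L (Icc (sSup S) b) := by
    have hd : ∀ u ∈ interior (Icc (sSup S) b), ∃ D, HasDerivAt L D u ∧ 0 ≤ D := by
      rw [interior_Icc]
      exact fun u hu => hderiv u ⟨has.trans_lt hu.1, hu.2⟩ (hpos u hu)
    choose! L' hL' hL'_nonneg using hd
    exact monotoneOn_of_hasDerivWithinAt_nonneg (convex_Icc _ _)
      (hL.mono (Icc_subset_Icc_left has)) (fun u hu => (hL' u hu).hasDerivWithinAt) hL'_nonneg
  exact hLs.trans (hmono ⟨le_rfl, hsb⟩ ⟨hsb, le_rfl⟩ hsb)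

theorem DifferentiableOn.hasDerivAt_derivWithin_Ici {f : ℝ → ℝ} {a u : ℝ}
    (hf : DifferentiableOn ℝ f (Ici a)) (hu : a < u) :
    HasDerivAt f (derivWithin f (Ici a) u) u := by
  have hn : Ici a ∈ 𝓝 u := Ici_mem_nhds hu
  rw [derivWithin_of_mem_nhds hn]
  exact ((hf u hu.le).differentiableAt hn).hasDerivAt

theorem exists_pos_le_and_mul_le {a y : ℝ} (ha : 0 < a) (hy : 0 < y) (x : ℝ) :
    ∃ c, 0 < c ∧ c ≤ a ∧ c * x ≤ y := by
  rcases le_or_gt x 0 with hx | hx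
  · exact ⟨a, ha, le_rfl, (mul_nonpos_of_nonneg_of_nonpos ha.le hx).trans hy.le⟩
  · refine ⟨min a (y / x), lt_min ha (div_pos hy hx), min_le_left _ _, ?_⟩
    calc min a (y / x) * x ≤ y / x * x := by gcongr; exact min_le_right _ _
      _ = y := div_mul_cancel₀ y hx.ne'

section ODE

variable {y : ℝ → ℝ} {u k m p q : ℝ}

theorem HasDerivAt.rpow_sub_add_one_of_mul_rpow (hy : 0 < y u)
    (hy' : HasDerivAt y (k * y u ^ p * m) u) :
    HasDerivAt (fun v => y v ^ (q - p + 1)) ((q - p + 1) * (k * y u ^ q * m)) u := by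
  convert hy'.rpow_const (p := q - p + 1) (Or.inl hy.ne') using 1
  rw [show q = p + (q - p + 1 - 1) by ring, Real.rpow_add hy]
  ring_nf

theorem HasDerivAt.log_of_mul_rpow_add_one (hy : 0 < y u)
    (hy' : HasDerivAt y (k * y u ^ (p + 1) * m) u) :
    HasDerivAt (fun v => Real.log (y v)) (k * y u ^ p * m) u := by
  convert hy'.log hy.ne' using 1
  rw [Real.rpow_add_one hy.ne']
  field_simp

end ODE

theorem hasDerivAt_rpow_sub_mul_log {y1 y2 h1 h2 g : ℝ → ℝ} {p11 p12 p21 c g' u : ℝ}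
    (hy1 : 0 < y1 u) (hy2 : 0 < y2 u) (hh2 : h2 u ≠ 0) (hg : g u = h1 u / h2 u)
    (hy1' : HasDerivAt y1 (h1 u * y1 u ^ p11 * y2 u ^ p12) u)
    (hy2' : HasDerivAt y2 (h2 u * y2 u ^ (p12 + 1) * y1 u ^ p21) u) (hg' : HasDerivAt g g' u) :
    HasDerivAt (fun v => y1 v ^ (p21 - p11 + 1) - c * g v * Real.log (y2 v))
      ((p21 - p11 + 1 - c) * (h1 u * y1 u ^ p21 * y2 u ^ p12) - c * g' * Real.log (y2 u)) u := by
  refine ((hy1'.rpow_sub_add_one_of_mul_rpow hy1 (q := p21)).sub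
    ((hg'.const_mul c).mul (hy2'.log_of_mul_rpow_add_one hy2))).congr_deriv ?_
  rw [hg]
  field_simp
  ring

theorem exists_hasDerivAt_rpow_sub_mul_log_nonneg {y1 y2 h1 h2 g : ℝ → ℝ}
    {p11 p12 p21 c g' u : ℝ} (hc : 0 ≤ c) (hca : c ≤ p21 - p11 + 1)
    (hy1 : 0 < y1 u) (hy2 : 0 < y2 u) (hlog : 0 < Real.log (y2 u)) (hh1 : 0 < h1 u)
    (hh2 : h2 u ≠ 0) (hg : g u = h1 u / h2 u)
    (hy1' : HasDerivAt y1 (h1 u * y1 u ^ p11 * y2 u ^ p12) u)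
    (hy2' : HasDerivAt y2 (h2 u * y2 u ^ (p12 + 1) * y1 u ^ p21) u)
    (hg' : HasDerivAt g g' u) (hg'_nonpos : g' ≤ 0) :
    ∃ D, HasDerivAt (fun v => y1 v ^ (p21 - p11 + 1) - c * g v * Real.log (y2 v)) D u ∧ 0 ≤ D := by
  refine ⟨_, hasDerivAt_rpow_sub_mul_log hy1 hy2 hh2 hg hy1' hy2' hg', ?_⟩
  have hQ : 0 < h1 u * y1 u ^ p21 * y2 u ^ p12 :=
    mul_pos (mul_pos hh1 (Real.rpow_pos_of_pos hy1 _)) (Real.rpow_pos_of_pos hy2 _)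
  nlinarith [mul_nonneg (sub_nonneg.2 hca) hQ.le,
    mul_nonneg (mul_nonneg hc (neg_nonneg.2 hg'_nonpos)) hlog.le]

theorem statement9_general (p11 p12 p21 p22 : ℝ)
    (h1 h2 : ℝ → ℝ)
    (hh1c : ContDiffOn ℝ 1 h1 (Set.Ici 0)) (hh2c : ContDiffOn ℝ 1 h2 (Set.Ici 0))
    (hh1p : ∀ t : ℝ, 0 ≤ t → 0 < h1 t) (hh2p : ∀ t : ℝ, 0 ≤ t → 0 < h2 t)
    (hdec : ∀ t : ℝ, 0 ≤ t →
      derivWithin (fun s => h1 s / h2 s) (Set.Ici 0) t ≤ 0)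
    (T : ℝ) (hT : 0 < T)
    (y1 y2 : ℝ → ℝ)
    (hy1pos : ∀ t ∈ Set.Ico (0:ℝ) T, 0 < y1 t)
    (hy2pos : ∀ t ∈ Set.Ico (0:ℝ) T, 0 < y2 t)
    (hy1d : ∀ t ∈ Set.Ico (0:ℝ) T,
      HasDerivWithinAt y1 (h1 t * y1 t ^ p11 * y2 t ^ p12) (Set.Ico 0 T) t)
    (hy2d : ∀ t ∈ Set.Ico (0:ℝ) T,
      HasDerivWithinAt y2 (h2 t * y2 t ^ p22 * y1 t ^ p21) (Set.Ico 0 T) t)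
    (ha1 : 0 < p21 - p11 + 1) (ha2 : p12 - p22 + 1 = 0) :
    ∃ c : ℝ, 0 < c ∧ ∀ t ∈ Set.Ico (0:ℝ) T,
      c * (h1 t / h2 t) * Real.log (y2 t) ≤ y1 t ^ (p21 - p11 + 1) := by
  obtain rfl : p22 = p12 + 1 := by linarith
  set g : ℝ → ℝ := fun s => h1 s / h2 s
  have hg_pos (t : ℝ) (ht : 0 ≤ t) : 0 < g t := div_pos (hh1p t ht) (hh2p t ht)
  have hg : ContDiffOn ℝ 1 g (Ici 0) := hh1c.div hh2c fun t ht => (hh2p t ht).ne'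
  have hy1c : ContinuousOn y1 (Ico 0 T) := fun u hu => (hy1d u hu).continuousWithinAt
  have hy2c : ContinuousOn y2 (Ico 0 T) := fun u hu => (hy2d u hu).continuousWithinAt
  have h0 : (0:ℝ) ∈ Ico 0 T := ⟨le_rfl, hT⟩
  obtain ⟨c, hc, hca, hc0⟩ := exists_pos_le_and_mul_le ha1
    (Real.rpow_pos_of_pos (hy1pos 0 h0) (p21 - p11 + 1)) (g 0 * Real.log (y2 0))
  refine ⟨c, hc, fun t ht => ?_⟩
  have hsub : Icc 0 t ⊆ Ico 0 T := Icc_subset_Ico_right ht.2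
  have hlogc : ContinuousOn (fun u => Real.log (y2 u)) (Icc 0 t) :=
    (hy2c.mono hsub).log fun u hu => (hy2pos u (hsub hu)).ne'
  set L : ℝ → ℝ := fun u => y1 u ^ (p21 - p11 + 1) - c * g u * Real.log (y2 u)
  suffices 0 ≤ L t from sub_nonneg.1 this
  have hL : ContinuousOn L (Icc 0 t) :=
    ((hy1c.mono hsub).rpow_const fun u hu => Or.inl (hy1pos u (hsub hu)).ne').sub
      ((continuousOn_const.mul (hg.continuousOn.mono fun u hu => hu.1)).mul hlogc)
  refine nonneg_of_hasDerivAt_nonneg_where_pos ht.1 hL hlogc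
    (sub_nonneg.2 ((mul_assoc _ _ _).trans_le hc0)) (fun u hu hlog => ?_) fun u hu hlog => ?_
  · exact sub_nonneg.2 ((mul_nonpos_of_nonneg_of_nonpos (mul_pos hc (hg_pos u hu.1)).le
      hlog).trans (Real.rpow_pos_of_pos (hy1pos u (hsub hu)) _).le)
  have hu' : u ∈ Ico 0 T := hsub (Ioo_subset_Icc_self hu)
  have hn : Ico 0 T ∈ 𝓝 u := Ico_mem_nhds hu.1 (hu.2.trans ht.2)
  exact exists_hasDerivAt_rpow_sub_mul_log_nonneg hc.le hca (hy1pos u hu') (hy2pos u hu') hlog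
    (hh1p u hu.1.le) (hh2p u hu.1.le).ne' rfl ((hy1d u hu').hasDerivAt hn)
    ((hy2d u hu').hasDerivAt hn)
    ((hg.differentiableOn one_ne_zero).hasDerivAt_derivWithin_Ici hu.1) (hdec u hu.1.le)

/-- Lemma 5.1(b) of the paper. If `h₁,h₂` are continuously
differentiable with `(h₁/h₂)' ≤ 0` on `[0,∞)`, `(y₁,y₂)` is a positive
differentiable solution of the ODE system on `[0,T)`, `a₁ = p₂₁-p₁₁+1 > 0` and
`a₂ = p₁₂-p₂₂+1 = 0`, then there is `c > 0` with
`y₁(t)^{a₁} ≥ c (h₁(t)/h₂(t)) log(y₂(t))` on `[0,T)`. -/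
theorem statement9 (p11 p12 p21 p22 : ℝ)
    (hp11 : 0 ≤ p11) (hp12 : 0 ≤ p12) (hp21 : 0 ≤ p21) (hp22 : 0 ≤ p22)
    (h1 h2 : ℝ → ℝ)
    (hh1c : ContDiffOn ℝ 1 h1 (Set.Ici 0)) (hh2c : ContDiffOn ℝ 1 h2 (Set.Ici 0))
    (hh1p : ∀ t : ℝ, 0 ≤ t → 0 < h1 t) (hh2p : ∀ t : ℝ, 0 ≤ t → 0 < h2 t)
    (hdec : ∀ t : ℝ, 0 ≤ t →
      derivWithin (fun s => h1 s / h2 s) (Set.Ici 0) t ≤ 0)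
    (T : ℝ) (hT : 0 < T)
    (y1 y2 : ℝ → ℝ)
    (hy1pos : ∀ t ∈ Set.Ico (0:ℝ) T, 0 < y1 t)
    (hy2pos : ∀ t ∈ Set.Ico (0:ℝ) T, 0 < y2 t)
    (hy1d : ∀ t ∈ Set.Ico (0:ℝ) T,
      HasDerivWithinAt y1 (h1 t * y1 t ^ p11 * y2 t ^ p12) (Set.Ico 0 T) t)
    (hy2d : ∀ t ∈ Set.Ico (0:ℝ) T,
      HasDerivWithinAt y2 (h2 t * y2 t ^ p22 * y1 t ^ p21) (Set.Ico 0 T) t)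
    (ha1 : 0 < p21 - p11 + 1) (ha2 : p12 - p22 + 1 = 0) :
    ∃ c : ℝ, 0 < c ∧ ∀ t ∈ Set.Ico (0:ℝ) T,
      c * (h1 t / h2 t) * Real.log (y2 t) ≤ y1 t ^ (p21 - p11 + 1) :=
  statement9_general p11 p12 p21 p22 h1 h2 hh1c hh2c hh1p hh2p hdec T hT y1 y2 hy1pos hy2pos hy1d
    hy2d ha1 ha2
end

section
/- Assume h₁, h₂ are continuously differentiable and the quotient h̃₁ := h₁/h₂ has nonpositive derivative on [0,∞). Let (y₁,y₂) : [0,T) → (0,∞)² be a differentiable solution of the ODE system with y₁(0), y₂(0) > 0. If a₁ = 0 and a₂ = 0, then y₁(t) ≥ y₁(0)·(y₂(t)/y₂(0))^{h̃₁(t)} for all t ∈ [0,T), where h̃₁(t) = h₁(t)/h₂(t). -/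
open Set

/-!
When `a₁ = a₂ = 0` both logarithmic derivatives equal `hᵢ · y₁^{p₂₁} y₂^{p₁₂}`, so
`(log y₁)' = h̃₁ · (log y₂)'`. Hence `F = log y₁ - log y₁(0) - h̃₁ · (log y₂ - log y₂(0))`
has `F' = -h̃₁' · (log y₂ - log y₂(0))`, which is nonnegative because `h̃₁' ≤ 0` and `y₂` is
increasing. Thus `F ≥ F(0) = 0`, and exponentiating gives the claim.
-/

lemma monotoneOn_of_hasDerivWithinAt_of_nonneg {D : Set ℝ} (hD : Convex ℝ D) {f f' : ℝ → ℝ}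
    (hf : ∀ x ∈ D, HasDerivWithinAt f (f' x) D x) (hf'₀ : ∀ x ∈ interior D, 0 ≤ f' x) :
    MonotoneOn f D :=
  monotoneOn_of_hasDerivWithinAt_nonneg hD (fun x hx ↦ (hf x hx).continuousWithinAt)
    (fun x hx ↦ (hf x (interior_subset hx)).mono interior_subset) hf'₀

lemma mul_sub_le_sub_of_hasDerivWithinAt {a b : ℝ} {L₁ L₂ g d g' : ℝ → ℝ}
    (hL₁ : ∀ s ∈ Ico a b, HasDerivWithinAt L₁ (g s * d s) (Ico a b) s)
    (hL₂ : ∀ s ∈ Ico a b, HasDerivWithinAt L₂ (d s) (Ico a b) s)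
    (hg : ∀ s ∈ Ico a b, HasDerivWithinAt g (g' s) (Ico a b) s)
    (hd : ∀ s ∈ Ioo a b, 0 ≤ d s) (hg' : ∀ s ∈ Ioo a b, g' s ≤ 0)
    {t : ℝ} (ht : t ∈ Ico a b) :
    g t * (L₂ t - L₂ a) ≤ L₁ t - L₁ a := by
  have ha : a ∈ Ico a b := ⟨le_rfl, ht.1.trans_lt ht.2⟩
  have hL₂_mono : MonotoneOn L₂ (Ico a b) :=
    monotoneOn_of_hasDerivWithinAt_of_nonneg (convex_Ico a b) hL₂
      (by rwa [interior_Ico])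
  let F : ℝ → ℝ := fun s ↦ L₁ s - g s * (L₂ s - L₂ a)
  have hF : ∀ s ∈ Ico a b,
      HasDerivWithinAt F (-g' s * (L₂ s - L₂ a)) (Ico a b) s := fun s hs ↦
    ((hL₁ s hs).sub ((hg s hs).mul ((hL₂ s hs).sub_const _))).congr_deriv (by ring)
  have hF_mono : MonotoneOn F (Ico a b) := by
    refine monotoneOn_of_hasDerivWithinAt_of_nonneg (convex_Ico a b) hF ?_
    rw [interior_Ico]
    intro s hs
    exact mul_nonneg (neg_nonneg.2 (hg' s hs))
      (sub_nonneg.2 (hL₂_mono ha ⟨hs.1.le, hs.2⟩ hs.1.le))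
  have := hF_mono ha ht ht.1
  simp only [F, sub_self, mul_zero, sub_zero] at this
  linarith

lemma rhs_div_eq_ratio_mul_rhs_div {p11 p12 p21 p22 c₁ c₂ y₁ y₂ : ℝ}
    (hp11 : p11 = p21 + 1) (hp22 : p22 = p12 + 1) (hc₂ : c₂ ≠ 0) (hy₁ : 0 < y₁) (hy₂ : 0 < y₂) :
    c₁ * y₁ ^ p11 * y₂ ^ p12 / y₁ = c₁ / c₂ * (c₂ * y₂ ^ p22 * y₁ ^ p21 / y₂) := by
  rw [hp11, hp22, Real.rpow_add hy₁, Real.rpow_add hy₂, Real.rpow_one, Real.rpow_one]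
  field_simp

lemma mul_div_rpow_le_of_log_le {a b c d e : ℝ} (ha : 0 < a) (hb : 0 < b) (hc : 0 < c)
    (hd : 0 < d) (h : Real.log a + e * (Real.log c - Real.log d) ≤ Real.log b) :
    a * (c / d) ^ e ≤ b := by
  have hcd : 0 < c / d := div_pos hc hd
  have hpow : 0 < (c / d) ^ e := Real.rpow_pos_of_pos hcd e
  rwa [← Real.log_le_log_iff (mul_pos ha hpow) hb, Real.log_mul ha.ne' hpow.ne',
    Real.log_rpow hcd, Real.log_div hc.ne' hd.ne']

theorem statement10_general (p11 p12 p21 p22 : ℝ)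
    (h1 h2 : ℝ → ℝ)
    (hh1c : ContDiffOn ℝ 1 h1 (Set.Ici 0)) (hh2c : ContDiffOn ℝ 1 h2 (Set.Ici 0))
    (hh2p : ∀ t : ℝ, 0 ≤ t → 0 < h2 t)
    (hdec : ∀ t : ℝ, 0 ≤ t →
      derivWithin (fun s => h1 s / h2 s) (Set.Ici 0) t ≤ 0)
    (T : ℝ)
    (y1 y2 : ℝ → ℝ)
    (hy1pos : ∀ t ∈ Set.Ico (0:ℝ) T, 0 < y1 t)
    (hy2pos : ∀ t ∈ Set.Ico (0:ℝ) T, 0 < y2 t)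
    (hy1d : ∀ t ∈ Set.Ico (0:ℝ) T,
      HasDerivWithinAt y1 (h1 t * y1 t ^ p11 * y2 t ^ p12) (Set.Ico 0 T) t)
    (hy2d : ∀ t ∈ Set.Ico (0:ℝ) T,
      HasDerivWithinAt y2 (h2 t * y2 t ^ p22 * y1 t ^ p21) (Set.Ico 0 T) t)
    (ha1 : p21 - p11 + 1 = 0) (ha2 : p12 - p22 + 1 = 0) :
    ∀ t ∈ Set.Ico (0:ℝ) T,
      y1 0 * (y2 t / y2 0) ^ (h1 t / h2 t) ≤ y1 t := by
  intro t ht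
  have h0 : (0 : ℝ) ∈ Ico 0 T := ⟨le_rfl, ht.1.trans_lt ht.2⟩
  have hg : DifferentiableOn ℝ (fun s ↦ h1 s / h2 s) (Ici 0) :=
    (hh1c.differentiableOn one_ne_zero).div (hh2c.differentiableOn one_ne_zero)
      fun s hs ↦ (hh2p s hs).ne'
  have hlog : Real.log (y1 0) + h1 t / h2 t * (Real.log (y2 t) - Real.log (y2 0))
      ≤ Real.log (y1 t) := by
    have key := mul_sub_le_sub_of_hasDerivWithinAt (L₁ := fun s ↦ Real.log (y1 s))
      (g' := derivWithin (fun s ↦ h1 s / h2 s) (Ici 0))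
      (fun s hs ↦ ((hy1d s hs).log (hy1pos s hs).ne').congr_deriv
        (rhs_div_eq_ratio_mul_rhs_div (by linarith) (by linarith) (hh2p s hs.1).ne'
          (hy1pos s hs) (hy2pos s hs)))
      (fun s hs ↦ (hy2d s hs).log (hy2pos s hs).ne')
      (fun s hs ↦ (hg s hs.1).hasDerivWithinAt.mono Ico_subset_Ici_self)
      (fun s hs ↦ by
        have := hh2p s hs.1.le
        have := hy1pos s (Ioo_subset_Ico_self hs)
        have := hy2pos s (Ioo_subset_Ico_self hs)
        positivity)
      (fun s hs ↦ hdec s hs.1.le) ht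
    linarith
  exact mul_div_rpow_le_of_log_le (hy1pos 0 h0) (hy1pos t ht) (hy2pos t ht) (hy2pos 0 h0) hlog

/-- Lemma 5.1(c) of the paper. If `h₁,h₂` are continuously
differentiable with `(h₁/h₂)' ≤ 0` on `[0,∞)`, `(y₁,y₂)` is a positive
differentiable solution of the ODE system on `[0,T)`, `a₁ = p₂₁-p₁₁+1 = 0` and
`a₂ = p₁₂-p₂₂+1 = 0`, then `y₁(t) ≥ y₁(0) (y₂(t)/y₂(0))^{h₁(t)/h₂(t)}`
on `[0,T)`. -/
theorem statement10 (p11 p12 p21 p22 : ℝ)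
    (hp11 : 0 ≤ p11) (hp12 : 0 ≤ p12) (hp21 : 0 ≤ p21) (hp22 : 0 ≤ p22)
    (h1 h2 : ℝ → ℝ)
    (hh1c : ContDiffOn ℝ 1 h1 (Set.Ici 0)) (hh2c : ContDiffOn ℝ 1 h2 (Set.Ici 0))
    (hh1p : ∀ t : ℝ, 0 ≤ t → 0 < h1 t) (hh2p : ∀ t : ℝ, 0 ≤ t → 0 < h2 t)
    (hdec : ∀ t : ℝ, 0 ≤ t →
      derivWithin (fun s => h1 s / h2 s) (Set.Ici 0) t ≤ 0)
    (T : ℝ) (hT : 0 < T)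
    (y1 y2 : ℝ → ℝ)
    (hy1pos : ∀ t ∈ Set.Ico (0:ℝ) T, 0 < y1 t)
    (hy2pos : ∀ t ∈ Set.Ico (0:ℝ) T, 0 < y2 t)
    (hy1d : ∀ t ∈ Set.Ico (0:ℝ) T,
      HasDerivWithinAt y1 (h1 t * y1 t ^ p11 * y2 t ^ p12) (Set.Ico 0 T) t)
    (hy2d : ∀ t ∈ Set.Ico (0:ℝ) T,
      HasDerivWithinAt y2 (h2 t * y2 t ^ p22 * y1 t ^ p21) (Set.Ico 0 T) t)
    (ha1 : p21 - p11 + 1 = 0) (ha2 : p12 - p22 + 1 = 0) :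
    ∀ t ∈ Set.Ico (0:ℝ) T,
      y1 0 * (y2 t / y2 0) ^ (h1 t / h2 t) ≤ y1 t :=
  statement10_general p11 p12 p21 p22 h1 h2 hh1c hh2c hh2p hdec T y1 y2 hy1pos hy2pos hy1d hy2d ha1
    ha2
end

section
/- Suppose p₁₁ > 1, let y₁⁰, y₂⁰ > 0, and suppose that ∫₀^∞ h₁(s) ds > y₁⁰^{1−p₁₁} / ((p₁₁−1)·(y₂⁰)^{p₁₂}) (where the improper integral on the left may be infinite). Then there is no pair of differentiable functions y₁, y₂ : [0,∞) → (0,∞) with y₁(0) = y₁⁰, y₂(0) = y₂⁰ solving the ODE system on all of [0,∞). -/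
/-!
Since `y₂' ≥ 0`, `y₂ ≥ y₂⁰`. Then `y₁^{1-p₁₁} / (p₁₁ - 1) + y₂⁰^{p₁₂} ∫₀ᵗ h₁` has derivative
`h₁ (y₂⁰^{p₁₂} - y₂^{p₁₂}) ≤ 0`, so it is nonincreasing; as `y₁^{1-p₁₁} > 0`, every partial
integral `∫₀ᵗ h₁` is at most `y₁⁰^{1-p₁₁} / ((p₁₁ - 1) y₂⁰^{p₁₂})`, and by monotone convergence
so is `∫₀^∞ h₁`.
-/

open MeasureTheory Set Filter

lemma monotoneOn_Ici_of_hasDerivWithinAt_nonneg {f f' : ℝ → ℝ} {a : ℝ}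
    (hf : ∀ t ∈ Ici a, HasDerivWithinAt f (f' t) (Ici a) t) (hf' : ∀ t ∈ Ioi a, 0 ≤ f' t) :
    MonotoneOn f (Ici a) := by
  refine monotoneOn_of_hasDerivWithinAt_nonneg (convex_Ici a)
    (fun t ht => (hf t ht).continuousWithinAt) (fun t ht => ?_) (by rwa [interior_Ici])
  rw [interior_Ici] at ht ⊢
  exact (hf t (mem_Ici_of_Ioi ht)).mono Ioi_subset_Ici_self

lemma antitoneOn_Ici_of_hasDerivWithinAt_nonpos {f f' : ℝ → ℝ} {a : ℝ}
    (hf : ∀ t ∈ Ici a, HasDerivWithinAt f (f' t) (Ici a) t) (hf' : ∀ t ∈ Ioi a, f' t ≤ 0) :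
    AntitoneOn f (Ici a) := fun _ hx _ hy hxy =>
  neg_le_neg_iff.mp <| monotoneOn_Ici_of_hasDerivWithinAt_nonneg (f := -f)
    (fun t ht => (hf t ht).neg) (fun t ht => neg_nonneg.mpr (hf' t ht)) hx hy hxy

lemma hasDerivWithinAt_intervalIntegral_Ici {h : ℝ → ℝ} {a t : ℝ} (hc : ContinuousOn h (Ici a))
    (ht : t ∈ Ici a) : HasDerivWithinAt (fun u => ∫ x in a..u, h x) (h t) (Ici a) t := by
  have hint : IntervalIntegrable h volume a t :=
    (hc.mono (by rw [uIcc_of_le ht]; exact Icc_subset_Ici_self)).intervalIntegrable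
  rcases (mem_Ici.mp ht).eq_or_lt with rfl | hlt
  · exact intervalIntegral.integral_hasDerivWithinAt_right hint
      ((hc.mono Ioi_subset_Ici_self).stronglyMeasurableAtFilter_nhdsWithin measurableSet_Ioi a)
      ((hc a ht).mono Ioi_subset_Ici_self)
  · exact (intervalIntegral.integral_hasDerivAt_right hint
      ((hc.mono Ioi_subset_Ici_self).stronglyMeasurableAtFilter isOpen_Ioi t hlt)
      ((hc t ht).continuousAt (Ici_mem_nhds hlt))).hasDerivWithinAt

theorem intervalIntegral_le_of_hasDerivWithinAt_rpow {y h k : ℝ → ℝ} {a p c : ℝ} (hp : 1 < p)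
    (hc : 0 < c) (hhc : ContinuousOn h (Ici a)) (hh : ∀ t ∈ Ici a, 0 ≤ h t)
    (hy : ∀ t ∈ Ici a, 0 < y t) (hk : ∀ t ∈ Ici a, c ≤ k t)
    (hdy : ∀ t ∈ Ici a, HasDerivWithinAt y (h t * y t ^ p * k t) (Ici a) t) :
    ∀ t ∈ Ici a, ∫ x in a..t, h x ≤ y a ^ (1 - p) / ((p - 1) * c) := by
  have hp1 : 0 < p - 1 := sub_pos.mpr hp
  have hG : AntitoneOn (fun t => y t ^ (1 - p) / (p - 1) + c * ∫ x in a..t, h x) (Ici a) := by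
    refine antitoneOn_Ici_of_hasDerivWithinAt_nonpos (f' := fun t => h t * (c - k t))
      (fun t ht => ?_) fun t ht => mul_nonpos_of_nonneg_of_nonpos (hh t (mem_Ici_of_Ioi ht))
        (sub_nonpos.mpr (hk t (mem_Ici_of_Ioi ht)))
    have hcancel : y t ^ p * y t ^ (1 - p - 1) = 1 := by
      rw [← Real.rpow_add (hy t ht)]; norm_num
    refine ((((hdy t ht).rpow_const (Or.inl (hy t ht).ne')).div_const (p - 1)).add
      ((hasDerivWithinAt_intervalIntegral_Ici hhc ht).const_mul c)).congr_deriv ?_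
    field_simp
    linear_combination (1 - p) * h t * k t * hcancel
  intro t ht
  have hGt := hG self_mem_Ici ht ht
  simp only [intervalIntegral.integral_same, mul_zero, add_zero] at hGt
  rw [div_add' _ _ _ hp1.ne', div_le_div_iff_of_pos_right hp1] at hGt
  rw [le_div_iff₀ (mul_pos hp1 hc)]
  linarith [Real.rpow_pos_of_pos (hy t ht) (1 - p)]

lemma lintegral_Ici_ofReal_le_of_intervalIntegral_le {h : ℝ → ℝ} {a C : ℝ}
    (hc : ContinuousOn h (Ici a)) (hh : ∀ t ∈ Ici a, 0 ≤ h t)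
    (hC : ∀ t ∈ Ici a, ∫ x in a..t, h x ≤ C) :
    ∫⁻ x in Ici a, ENNReal.ofReal (h x) ≤ ENNReal.ofReal C := by
  have hcover := aecover_Ici_of_Ico (μ := volume) (B := a) (l := atTop) (d := fun t => t) tendsto_id
  refine le_of_tendsto (hcover.lintegral_tendsto_of_countably_generated
    (hc.aestronglyMeasurable measurableSet_Ici).aemeasurable.ennreal_ofReal) ?_
  filter_upwards [eventually_ge_atTop a] with t ht
  have hsub : Ico a t ⊆ Ici a := Ico_subset_Ici_self
  rw [Measure.restrict_restrict measurableSet_Ico, inter_eq_left.mpr hsub,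
    ← ofReal_integral_eq_lintegral_ofReal
      ((hc.mono Icc_subset_Ici_self).integrableOn_compact isCompact_Icc |>.mono_set
        Ico_subset_Icc_self)
      ((ae_restrict_mem measurableSet_Ico).mono fun x hx => hh x (hsub hx))]
  refine ENNReal.ofReal_le_ofReal ?_
  rw [integral_Ico_eq_integral_Ioo, ← integral_Ioc_eq_integral_Ioo,
    ← intervalIntegral.integral_of_le ht]
  exact hC t ht

theorem statement12_general (p11 p12 p21 p22 : ℝ)
    (hp12 : 0 ≤ p12)
    (h1 h2 : ℝ → ℝ)
    (hh1c : ContinuousOn h1 (Set.Ici 0))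
    (hh1p : ∀ t : ℝ, 0 ≤ t → 0 < h1 t) (hh2p : ∀ t : ℝ, 0 ≤ t → 0 < h2 t)
    (hp : 1 < p11)
    (y10 y20 : ℝ)
    (hint : ENNReal.ofReal (y10 ^ (1 - p11) / ((p11 - 1) * y20 ^ p12)) <
      ∫⁻ s in Set.Ici (0:ℝ), ENNReal.ofReal (h1 s)) :
    ¬ ∃ y1 y2 : ℝ → ℝ,
        y1 0 = y10 ∧ y2 0 = y20 ∧
        (∀ t : ℝ, 0 ≤ t → 0 < y1 t) ∧ (∀ t : ℝ, 0 ≤ t → 0 < y2 t) ∧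
        (∀ t : ℝ, 0 ≤ t →
          HasDerivWithinAt y1 (h1 t * y1 t ^ p11 * y2 t ^ p12) (Set.Ici 0) t) ∧
        (∀ t : ℝ, 0 ≤ t →
          HasDerivWithinAt y2 (h2 t * y2 t ^ p22 * y1 t ^ p21) (Set.Ici 0) t) := by
  rintro ⟨y1, y2, rfl, rfl, hy1, hy2, hd1, hd2⟩
  have hh1 : ∀ t ∈ Ici (0 : ℝ), 0 ≤ h1 t := fun t ht => (hh1p t ht).le
  have hy2_mono : MonotoneOn y2 (Ici 0) :=
    monotoneOn_Ici_of_hasDerivWithinAt_nonneg hd2 fun t ht =>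
      mul_nonneg (mul_nonneg (hh2p t ht.le).le (Real.rpow_nonneg (hy2 t ht.le).le _))
        (Real.rpow_nonneg (hy1 t ht.le).le _)
  have hpartial := intervalIntegral_le_of_hasDerivWithinAt_rpow hp
    (Real.rpow_pos_of_pos (hy2 0 le_rfl) p12) hh1c hh1 hy1
    (fun t ht => Real.rpow_le_rpow (hy2 0 le_rfl).le (hy2_mono self_mem_Ici ht ht) hp12) hd1
  exact hint.not_ge (lintegral_Ici_ofReal_le_of_intervalIntegral_le hh1c hh1 hpartial)

/-- Proposition 5.3 of the paper. If `p₁₁ > 1` and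
`∫₀^∞ h₁(s) ds > y₁⁰^{1-p₁₁} / ((p₁₁-1) (y₂⁰)^{p₁₂})` (the improper integral,
taken as a Lebesgue integral with values in `[0,∞]`, may be infinite), then the
ODE system has no global positive solution on `[0,∞)` with initial values
`y₁⁰, y₂⁰ > 0`. -/
theorem statement12 (p11 p12 p21 p22 : ℝ)
    (hp11 : 0 ≤ p11) (hp12 : 0 ≤ p12) (hp21 : 0 ≤ p21) (hp22 : 0 ≤ p22)
    (h1 h2 : ℝ → ℝ)
    (hh1c : ContinuousOn h1 (Set.Ici 0)) (hh2c : ContinuousOn h2 (Set.Ici 0))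
    (hh1p : ∀ t : ℝ, 0 ≤ t → 0 < h1 t) (hh2p : ∀ t : ℝ, 0 ≤ t → 0 < h2 t)
    (hp : 1 < p11)
    (y10 y20 : ℝ) (hy10 : 0 < y10) (hy20 : 0 < y20)
    (hint : ENNReal.ofReal (y10 ^ (1 - p11) / ((p11 - 1) * y20 ^ p12)) <
      ∫⁻ s in Set.Ici (0:ℝ), ENNReal.ofReal (h1 s)) :
    ¬ ∃ y1 y2 : ℝ → ℝ,
        y1 0 = y10 ∧ y2 0 = y20 ∧
        (∀ t : ℝ, 0 ≤ t → 0 < y1 t) ∧ (∀ t : ℝ, 0 ≤ t → 0 < y2 t) ∧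
        (∀ t : ℝ, 0 ≤ t →
          HasDerivWithinAt y1 (h1 t * y1 t ^ p11 * y2 t ^ p12) (Set.Ici 0) t) ∧
        (∀ t : ℝ, 0 ≤ t →
          HasDerivWithinAt y2 (h2 t * y2 t ^ p22 * y1 t ^ p21) (Set.Ici 0) t) :=
  statement12_general p11 p12 p21 p22 hp12 h1 h2 hh1c hh1p hh2p hp y10 y20 hint
end

section
/- Let (y₁,y₂) : [0,T) → (0,∞)² be a differentiable solution of the ODE system with y₁(0), y₂(0) > 0. Assume a₁ > 0 and a₂ ≠ 0, and suppose c > 0 is a constant such that y₁(t) ≥ c·(h₁(t)/h₂(t))^{1/a₁}·y₂(t)^{a₂/a₁} for all t ∈ [0,T). Set α₂ = p₂₂ + p₂₁·a₂/a₁. If α₂ > 1, then for every t ∈ [0,T): c^{p₂₁}·∫₀ᵗ h₂(s)·(h₁(s)/h₂(s))^{p₂₁/a₁} ds < y₂(0)^{1−α₂}/(α₂−1). (In particular, T is bounded above whenever the left-hand side, as a function of its upper limit, eventually exceeds the right-hand side.) -/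
open MeasureTheory Set

/-- Theorem 1.3(a.1) of the paper (blow-up estimate for the second
component). With `a₁ = p₂₁-p₁₁+1 > 0`, `a₂ = p₁₂-p₂₂+1 ≠ 0`, a constant `c > 0`
with `y₁ ≥ c (h₁/h₂)^{1/a₁} y₂^{a₂/a₁}` on `[0,T)`, and `α₂ = p₂₂+p₂₁ a₂/a₁ > 1`,
one has `c^{p₂₁} ∫₀ᵗ h₂(s)(h₁(s)/h₂(s))^{p₂₁/a₁} ds < y₂(0)^{1-α₂}/(α₂-1)` for
every `t ∈ [0,T)`. -/
theorem statement13 (p11 p12 p21 p22 : ℝ)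
    (hp11 : 0 ≤ p11) (hp12 : 0 ≤ p12) (hp21 : 0 ≤ p21) (hp22 : 0 ≤ p22)
    (h1 h2 : ℝ → ℝ)
    (hh1c : ContinuousOn h1 (Set.Ici 0)) (hh2c : ContinuousOn h2 (Set.Ici 0))
    (hh1p : ∀ t : ℝ, 0 ≤ t → 0 < h1 t) (hh2p : ∀ t : ℝ, 0 ≤ t → 0 < h2 t)
    (T : ℝ) (hT : 0 < T)
    (y1 y2 : ℝ → ℝ)
    (hy1pos : ∀ t ∈ Set.Ico (0:ℝ) T, 0 < y1 t)
    (hy2pos : ∀ t ∈ Set.Ico (0:ℝ) T, 0 < y2 t)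
    (hy1d : ∀ t ∈ Set.Ico (0:ℝ) T,
      HasDerivWithinAt y1 (h1 t * y1 t ^ p11 * y2 t ^ p12) (Set.Ico 0 T) t)
    (hy2d : ∀ t ∈ Set.Ico (0:ℝ) T,
      HasDerivWithinAt y2 (h2 t * y2 t ^ p22 * y1 t ^ p21) (Set.Ico 0 T) t)
    (ha1 : 0 < p21 - p11 + 1) (ha2 : p12 - p22 + 1 ≠ 0)
    (c : ℝ) (hc : 0 < c)
    (hbound : ∀ t ∈ Set.Ico (0:ℝ) T,
      c * (h1 t / h2 t) ^ (1 / (p21 - p11 + 1)) *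
          y2 t ^ ((p12 - p22 + 1) / (p21 - p11 + 1)) ≤ y1 t)
    (hα : 1 < p22 + p21 * ((p12 - p22 + 1) / (p21 - p11 + 1))) :
    ∀ t ∈ Set.Ico (0:ℝ) T,
      c ^ p21 *
          (∫ s in (0:ℝ)..t, h2 s * (h1 s / h2 s) ^ (p21 / (p21 - p11 + 1))) <
        y2 0 ^ (1 - (p22 + p21 * ((p12 - p22 + 1) / (p21 - p11 + 1)))) /
          ((p22 + p21 * ((p12 - p22 + 1) / (p21 - p11 + 1))) - 1) := by
  intro t ht
  obtain ⟨ht0, htT⟩ := ht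
  set a1 := p21 - p11 + 1 with ha1def
  set a2 := p12 - p22 + 1 with ha2def
  set α := p22 + p21 * (a2 / a1) with hαdef
  have hIccsub : Set.Icc (0:ℝ) t ⊆ Set.Ico 0 T :=
    fun s hs => ⟨hs.1, lt_of_le_of_lt hs.2 htT⟩
  have htmem : t ∈ Set.Ico (0:ℝ) T := ⟨ht0, htT⟩
  have h0mem : (0:ℝ) ∈ Set.Ico (0:ℝ) T := ⟨le_refl 0, hT⟩
  have hy1c : ContinuousOn y1 (Set.Ico 0 T) := fun s hs => (hy1d s hs).continuousWithinAt
  have hy2c : ContinuousOn y2 (Set.Ico 0 T) := fun s hs => (hy2d s hs).continuousWithinAt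
  set g : ℝ → ℝ := fun s => c ^ p21 * (h2 s * (h1 s / h2 s) ^ (p21 / a1)) with hgdef
  set φ : ℝ → ℝ := fun s => y2 s ^ (1 - α) with hφdef
  set φ' : ℝ → ℝ := fun s =>
    (1 - α) * y2 s ^ (1 - α - 1) * (h2 s * y2 s ^ p22 * y1 s ^ p21) with hφ'def
  have hφd : ∀ s ∈ Set.Ico (0:ℝ) T, HasDerivWithinAt φ (φ' s) (Set.Ico 0 T) s := by
    intro s hs
    have h := (hy2d s hs).rpow_const (p := 1 - α) (Or.inl (ne_of_gt (hy2pos s hs)))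
    convert h using 1
    simp only [hφ'def]
    ring
  have hy1cc : ContinuousOn y1 (Set.Icc 0 t) := hy1c.mono hIccsub
  have hy2cc : ContinuousOn y2 (Set.Icc 0 t) := hy2c.mono hIccsub
  have hh2cc : ContinuousOn h2 (Set.Icc 0 t) := hh2c.mono (fun s hs => (hIccsub hs).1)
  have hh1cc : ContinuousOn h1 (Set.Icc 0 t) := hh1c.mono (fun s hs => (hIccsub hs).1)
  have hφ'cont : ContinuousOn φ' (Set.Icc 0 t) := by
    apply ContinuousOn.mul
    · exact continuousOn_const.mul
        (hy2cc.rpow_const (fun s hs => Or.inl (ne_of_gt (hy2pos s (hIccsub hs)))))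
    · exact (hh2cc.mul
        (hy2cc.rpow_const (fun s hs => Or.inl (ne_of_gt (hy2pos s (hIccsub hs)))))).mul
        (hy1cc.rpow_const (fun s hs => Or.inl (ne_of_gt (hy1pos s (hIccsub hs)))))
  have hgcont : ContinuousOn g (Set.Icc 0 t) := by
    apply continuousOn_const.mul
    apply hh2cc.mul
    apply ContinuousOn.rpow_const (hh1cc.div hh2cc
      (fun s hs => ne_of_gt (hh2p s (hIccsub hs).1)))
    intro s hs
    exact Or.inl (ne_of_gt (div_pos (hh1p s (hIccsub hs).1) (hh2p s (hIccsub hs).1)))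
  have hφcont : ContinuousOn φ (Set.Icc 0 t) :=
    hy2cc.rpow_const (fun s hs => Or.inl (ne_of_gt (hy2pos s (hIccsub hs))))
  have hint : IntervalIntegrable φ' MeasureTheory.volume 0 t := by
    apply ContinuousOn.intervalIntegrable
    rwa [Set.uIcc_of_le ht0]
  have hgint : IntervalIntegrable (fun s => (1 - α) * g s) MeasureTheory.volume 0 t := by
    apply ContinuousOn.intervalIntegrable
    rw [Set.uIcc_of_le ht0]
    exact continuousOn_const.mul hgcont
  have hftc : ∫ s in (0:ℝ)..t, φ' s = φ t - φ 0 := by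
    apply intervalIntegral.integral_eq_sub_of_hasDeriv_right_of_le ht0 hφcont _ hint
    intro x hx
    have hxm : x ∈ Set.Ico (0:ℝ) T := ⟨hx.1.le, hx.2.trans htT⟩
    have hmem : Set.Ico (0:ℝ) T ∈ nhds x := Ico_mem_nhds hx.1 (hx.2.trans htT)
    exact ((hφd x hxm).hasDerivAt hmem).hasDerivWithinAt
  have hα1 : (0:ℝ) < α - 1 := by linarith
  have hptw : ∀ s ∈ Set.Icc (0:ℝ) t, φ' s ≤ (1 - α) * g s := by
    intro s hs
    have hs' := hIccsub hs
    have hy1p := hy1pos s hs'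
    have hy2p := hy2pos s hs'
    have hh1p' := hh1p s hs'.1
    have hh2p' := hh2p s hs'.1
    have hdivp : 0 < h1 s / h2 s := div_pos hh1p' hh2p'
    have hbase : 0 ≤ c * (h1 s / h2 s) ^ (1 / a1) * y2 s ^ (a2 / a1) := by positivity
    have hy1pow : (c * (h1 s / h2 s) ^ (1 / a1) * y2 s ^ (a2 / a1)) ^ p21 ≤ y1 s ^ p21 :=
      Real.rpow_le_rpow hbase (hbound s hs') hp21
    have hexpand : (c * (h1 s / h2 s) ^ (1 / a1) * y2 s ^ (a2 / a1)) ^ p21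
        = c ^ p21 * (h1 s / h2 s) ^ (p21 / a1) * y2 s ^ (p21 * (a2 / a1)) := by
      rw [Real.mul_rpow (by positivity) (by positivity),
        Real.mul_rpow hc.le (by positivity),
        ← Real.rpow_mul hdivp.le, ← Real.rpow_mul hy2p.le]
      rw [show 1 / a1 * p21 = p21 / a1 by ring, show a2 / a1 * p21 = p21 * (a2 / a1) by ring]
    rw [hexpand] at hy1pow
    have hkey : g s * y2 s ^ α ≤ h2 s * y2 s ^ p22 * y1 s ^ p21 := by
      have heq : g s * y2 s ^ α
          = h2 s * y2 s ^ p22 *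
            (c ^ p21 * (h1 s / h2 s) ^ (p21 / a1) * y2 s ^ (p21 * (a2 / a1))) := by
        rw [hαdef, Real.rpow_add hy2p]
        ring
      rw [heq]
      exact mul_le_mul_of_nonneg_left hy1pow (by positivity)
    have hk : (1 - α) * y2 s ^ (1 - α - 1) ≤ 0 :=
      mul_nonpos_of_nonpos_of_nonneg (by linarith) (by positivity)
    have hfin : (1 - α) * y2 s ^ (1 - α - 1) * (g s * y2 s ^ α) = (1 - α) * g s := by
      have h1eq : y2 s ^ (1 - α - 1) * y2 s ^ α = 1 := by
        rw [← Real.rpow_add hy2p]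
        norm_num
      calc (1 - α) * y2 s ^ (1 - α - 1) * (g s * y2 s ^ α)
          = (1 - α) * g s * (y2 s ^ (1 - α - 1) * y2 s ^ α) := by ring
        _ = (1 - α) * g s := by rw [h1eq, mul_one]
    calc φ' s = (1 - α) * y2 s ^ (1 - α - 1) * (h2 s * y2 s ^ p22 * y1 s ^ p21) := rfl
      _ ≤ (1 - α) * y2 s ^ (1 - α - 1) * (g s * y2 s ^ α) :=
          mul_le_mul_of_nonpos_left hkey hk
      _ = (1 - α) * g s := hfin
  have hmono : ∫ s in (0:ℝ)..t, φ' s ≤ ∫ s in (0:ℝ)..t, (1 - α) * g s :=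
    intervalIntegral.integral_mono_on ht0 hint hgint hptw
  have hsplit : ∫ s in (0:ℝ)..t, (1 - α) * g s = (1 - α) * ∫ s in (0:ℝ)..t, g s :=
    intervalIntegral.integral_const_mul _ _
  have hJ : (∫ s in (0:ℝ)..t, g s)
      = c ^ p21 * ∫ s in (0:ℝ)..t, h2 s * (h1 s / h2 s) ^ (p21 / a1) :=
    intervalIntegral.integral_const_mul _ _
  set J := ∫ s in (0:ℝ)..t, g s with hJdef
  have hφtpos : 0 < φ t := Real.rpow_pos_of_pos (hy2pos t htmem) _
  have hmain : φ t - φ 0 ≤ (1 - α) * J := by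
    rw [← hsplit, ← hftc]
    exact hmono
  rw [← hJ]
  have hφ0 : φ 0 = y2 0 ^ (1 - α) := rfl
  rw [← hφ0, lt_div_iff₀ hα1]
  nlinarith [hmain, hφtpos]
end

section
/- Let (y₁,y₂) : [0,T) → (0,∞)² be a differentiable solution of the ODE system with y₁(0), y₂(0) > 0. Assume a₁ > 0 and a₂ > 0, and suppose c > 0 is a constant such that y₁(t) ≥ c·(h₁(t)/h₂(t))^{1/a₁}·y₂(t)^{a₂/a₁} for all t ∈ [0,T). Set α₁ = p₁₁ + p₁₂·a₁/a₂ and F(t) = c^{−p₁₂·a₁/a₂}·∫₀ᵗ h₁(s)·(h₁(s)/h₂(s))^{−p₁₂/a₂} ds. Then for every t ∈ [0,T): ∫_{y₁(0)}^{y₁(t)} s^{−α₁} ds ≤ F(t). Consequently, if α₁ ≤ 1, or if α₁ > 1 and F(t) ≤ y₁(0)^{1−α₁}/(α₁−1) for all t ≥ 0, then for every finite S > 0 one has sup{ y₁(t) : t ∈ [0,T), t ≤ S } < ∞ (the first component does not blow up in finite time). -/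
open MeasureTheory Set intervalIntegral

/-!
Raising the lower bound `y₁ ≥ c (h₁/h₂)^{1/a₁} y₂^{a₂/a₁}` to the power `p₁₂ a₁ / a₂` bounds
`y₂^{p₁₂}` by a power of `y₁`, so the first equation yields the differential inequality
`y₁' y₁^{-α₁} ≤ c^{-p₁₂ a₁/a₂} h₁ (h₁/h₂)^{-p₁₂/a₂}`. Comparing the derivatives of both sides
of the estimate gives `Φ(y₁ t) ≤ F t`, where `Φ x = ∫_{y₁(0)}^x s^{-α₁} ds`. Finally `Φ` is
explicit: it is unbounded when `α₁ ≤ 1` and increases to `y₁(0)^{1-α₁}/(α₁-1)` otherwise,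
while `F t ≤ F T < F (T + 1)` on `[0,T)`, so the sublevel set of `Φ` containing `y₁` on `[0,T)`
is bounded.
-/

theorem hasDerivAt_integral_of_continuousOn_Ioi {φ : ℝ → ℝ} (hφ : ContinuousOn φ (Ioi 0))
    {x₀ x : ℝ} (hx₀ : 0 < x₀) (hx : 0 < x) :
    HasDerivAt (fun u => ∫ s in x₀..u, φ s) (φ x) x :=
  integral_hasDerivAt_right ((hφ.mono (ordConnected_Ioi.uIcc_subset hx₀ hx)).intervalIntegrable)
    (hφ.stronglyMeasurableAtFilter isOpen_Ioi x hx) (hφ.continuousAt (Ioi_mem_nhds hx))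

theorem integral_le_integral_of_hasDerivWithinAt_mul_le {y y' φ g : ℝ → ℝ} {a T t : ℝ}
    (hφ : ContinuousOn φ (Ioi 0)) (hg : ContinuousOn g (Ico a T))
    (hpos : ∀ s ∈ Ico a T, 0 < y s)
    (hy : ∀ s ∈ Ico a T, HasDerivWithinAt y (y' s) (Ico a T) s)
    (hle : ∀ s ∈ Ico a T, y' s * φ (y s) ≤ g s) (ht : t ∈ Ico a T) :
    ∫ x in y a..y t, φ x ≤ ∫ s in a..t, g s := by
  have hsub : Icc a t ⊆ Ico a T := Icc_subset_Ico_right ht.2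
  have hya : 0 < y a := hpos a ⟨le_rfl, ht.1.trans_lt ht.2⟩
  have hG (s) (hs : s ∈ Ico a T) : HasDerivAt (fun u => ∫ x in y a..u, φ x) (φ (y s)) (y s) :=
    hasDerivAt_integral_of_continuousOn_Ioi hφ hya (hpos s hs)
  suffices MonotoneOn (fun s => (∫ r in a..s, g r) - ∫ x in y a..y s, φ x) (Icc a t) by
    simpa using this ⟨le_rfl, ht.1⟩ ⟨ht.1, le_rfl⟩ ht.1
  have hIoo : interior (Icc a t) ⊆ Ioo a T := by
    rw [interior_Icc]; exact Ioo_subset_Ioo_right ht.2.le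
  refine monotoneOn_of_hasDerivWithinAt_nonneg (convex_Icc a t) ?_ (fun s hs => ?_)
    (fun s hs => sub_nonneg.2 (mul_comm (φ (y s)) (y' s) ▸ hle s (Ioo_subset_Ico_self (hIoo hs))))
  · have hgi : IntervalIntegrable g volume a t :=
      (hg.mono (uIcc_of_le ht.1 ▸ hsub)).intervalIntegrable
    refine ContinuousOn.sub (uIcc_of_le ht.1 ▸ continuousOn_primitive_interval' hgi left_mem_uIcc)
      fun s hs => ?_
    exact (hG s (hsub hs)).continuousAt.comp_continuousWithinAt
      ((hy s (hsub hs)).continuousWithinAt.mono hsub)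
  · have hs' : s ∈ Ioo a T := hIoo hs
    have hys : HasDerivAt y (y' s) s := (hy s (Ioo_subset_Ico_self hs')).hasDerivAt
      (Ico_mem_nhds hs'.1 hs'.2)
    have hgs : HasDerivAt (fun u => ∫ r in a..u, g r) (g s) s :=
      integral_hasDerivAt_right
        ((hg.mono (ordConnected_Ico.uIcc_subset ⟨le_rfl, hs'.1.trans hs'.2⟩
          (Ioo_subset_Ico_self hs'))).intervalIntegrable)
        ((hg.mono Ioo_subset_Ico_self).stronglyMeasurableAtFilter isOpen_Ioo s hs')
        (hg.continuousAt (Ico_mem_nhds hs'.1 hs'.2))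
    exact (hgs.sub ((hG s (Ioo_subset_Ico_self hs')).comp s hys)).hasDerivWithinAt

theorem strictMonoOn_integral_of_pos {g : ℝ → ℝ} {a : ℝ} (hg : ContinuousOn g (Ici a))
    (hpos : ∀ s ∈ Ici a, 0 < g s) : StrictMonoOn (fun t => ∫ s in a..t, g s) (Ici a) := by
  intro s hs t ht hst
  have hint {u v : ℝ} (hu : u ∈ Ici a) (hv : v ∈ Ici a) : IntervalIntegrable g volume u v :=
    (hg.mono (ordConnected_Ici.uIcc_subset hu hv)).intervalIntegrable
  have hdiff := integral_interval_sub_left (hint self_mem_Ici ht) (hint self_mem_Ici hs)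
  have hpos' := intervalIntegral_pos_of_pos_on (hint hs ht)
    (fun x hx => hpos x (le_trans hs hx.1.le)) hst
  dsimp only
  linarith

theorem rpow_mul_rpow_neg_le_of_le {p a₁ a₂ c H A B : ℝ} (hp : 0 ≤ p) (ha₁ : 0 < a₁)
    (ha₂ : 0 < a₂) (hc : 0 < c) (hH : 0 < H) (hA : 0 < A) (hB : 0 < B)
    (hle : c * H ^ (1 / a₁) * B ^ (a₂ / a₁) ≤ A) :
    B ^ p * A ^ (-(p * a₁ / a₂)) ≤ c ^ (-(p * a₁ / a₂)) * H ^ (-(p / a₂)) := by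
  set q := p * a₁ / a₂ with hq
  have hpow : c ^ q * H ^ (p / a₂) * B ^ p ≤ A ^ q := by
    have h := Real.rpow_le_rpow (by positivity) hle (by positivity : 0 ≤ q)
    rwa [Real.mul_rpow (by positivity) (by positivity), Real.mul_rpow hc.le (by positivity),
      ← Real.rpow_mul hH.le, ← Real.rpow_mul hB.le,
      show 1 / a₁ * q = p / a₂ by rw [hq]; field_simp,
      show a₂ / a₁ * q = p by rw [hq]; field_simp] at h
  rw [Real.rpow_neg hA.le, Real.rpow_neg hc.le, Real.rpow_neg hH.le, ← mul_inv,
    ← div_eq_mul_inv, div_le_iff₀ (by positivity), ← div_eq_inv_mul,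
    le_div_iff₀ (by positivity)]
  linarith

theorem mul_rpow_mul_rpow_mul_rpow_neg_le {p₁₁ p₁₂ a₁ a₂ c h H A B : ℝ} (hp₁₂ : 0 ≤ p₁₂)
    (ha₁ : 0 < a₁) (ha₂ : 0 < a₂) (hc : 0 < c) (hh : 0 ≤ h) (hH : 0 < H) (hA : 0 < A)
    (hB : 0 < B) (hle : c * H ^ (1 / a₁) * B ^ (a₂ / a₁) ≤ A) :
    h * A ^ p₁₁ * B ^ p₁₂ * A ^ (-(p₁₁ + p₁₂ * (a₁ / a₂))) ≤
      c ^ (-(p₁₂ * a₁ / a₂)) * (h * H ^ (-(p₁₂ / a₂))) := by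
  have hA_pow : A ^ p₁₁ * A ^ (-(p₁₁ + p₁₂ * (a₁ / a₂))) = A ^ (-(p₁₂ * a₁ / a₂)) := by
    rw [← Real.rpow_add hA]; ring_nf
  calc h * A ^ p₁₁ * B ^ p₁₂ * A ^ (-(p₁₁ + p₁₂ * (a₁ / a₂)))
      = h * (B ^ p₁₂ * A ^ (-(p₁₂ * a₁ / a₂))) := by rw [← hA_pow]; ring
    _ ≤ h * (c ^ (-(p₁₂ * a₁ / a₂)) * H ^ (-(p₁₂ / a₂))) :=
      mul_le_mul_of_nonneg_left (rpow_mul_rpow_neg_le_of_le hp₁₂ ha₁ ha₂ hc hH hA hB hle) hh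
    _ = c ^ (-(p₁₂ * a₁ / a₂)) * (h * H ^ (-(p₁₂ / a₂))) := by ring

theorem integral_rpow_neg_of_ne_one {α x₀ x : ℝ} (hα : α ≠ 1) (hx₀ : 0 < x₀) (hx : 0 < x) :
    ∫ s in x₀..x, s ^ (-α) = (x ^ (1 - α) - x₀ ^ (1 - α)) / (1 - α) := by
  rw [integral_rpow (Or.inr ⟨fun h => hα (by linarith),
    notMem_uIcc_of_lt hx₀ hx⟩), neg_add_eq_sub]

theorem exists_le_of_integral_rpow_neg_le {α B x₀ : ℝ} (hx₀ : 0 < x₀)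
    (hα : α ≤ 1 ∨ 1 < α ∧ B < x₀ ^ (1 - α) / (α - 1)) :
    ∃ C, ∀ x, 0 < x → ∫ s in x₀..x, s ^ (-α) ≤ B → x ≤ C := by
  have hroot {x : ℝ} (hx : 0 < x) (hα : α ≠ 1) : (x ^ (1 - α)) ^ (1 / (1 - α)) = x := by
    rw [← Real.rpow_mul hx.le, mul_one_div_cancel (sub_ne_zero.2 hα.symm), Real.rpow_one]
  rcases hα with hα | ⟨hα, hB⟩
  · rcases hα.lt_or_eq with hα | rfl
    · have hα' : 0 < 1 - α := by linarith
      refine ⟨(x₀ ^ (1 - α) + (1 - α) * B) ^ (1 / (1 - α)), fun x hx hxB => ?_⟩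
      rw [integral_rpow_neg_of_ne_one hα.ne hx₀ hx, div_le_iff₀ hα'] at hxB
      rw [← hroot hx hα.ne]
      exact Real.rpow_le_rpow (by positivity) (by linarith) (by positivity)
    · refine ⟨x₀ * Real.exp B, fun x hx hxB => ?_⟩
      simp only [Real.rpow_neg_one] at hxB
      rwa [integral_inv_of_pos hx₀ hx, Real.log_le_iff_le_exp (div_pos hx hx₀),
        div_le_iff₀ hx₀, mul_comm] at hxB
  · have hα' : 1 - α < 0 := by linarith
    have hB' : 0 < x₀ ^ (1 - α) - (α - 1) * B := by
      rw [lt_div_iff₀ (by linarith)] at hB; linarith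
    refine ⟨(x₀ ^ (1 - α) - (α - 1) * B) ^ (1 / (1 - α)), fun x hx hxB => ?_⟩
    rw [integral_rpow_neg_of_ne_one hα.ne' hx₀ hx, div_le_iff_of_neg hα'] at hxB
    rw [← hroot hx hα.ne']
    exact Real.rpow_le_rpow_of_nonpos hB' (by linarith) (one_div_neg.2 hα').le

theorem statement14_general (p11 p12 p21 p22 : ℝ)
    (hp12 : 0 ≤ p12)
    (h1 h2 : ℝ → ℝ)
    (hh1c : ContinuousOn h1 (Set.Ici 0)) (hh2c : ContinuousOn h2 (Set.Ici 0))
    (hh1p : ∀ t : ℝ, 0 ≤ t → 0 < h1 t) (hh2p : ∀ t : ℝ, 0 ≤ t → 0 < h2 t)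
    (T : ℝ) (hT : 0 < T)
    (y1 y2 : ℝ → ℝ)
    (hy1pos : ∀ t ∈ Set.Ico (0:ℝ) T, 0 < y1 t)
    (hy2pos : ∀ t ∈ Set.Ico (0:ℝ) T, 0 < y2 t)
    (hy1d : ∀ t ∈ Set.Ico (0:ℝ) T,
      HasDerivWithinAt y1 (h1 t * y1 t ^ p11 * y2 t ^ p12) (Set.Ico 0 T) t)
    (ha1 : 0 < p21 - p11 + 1) (ha2 : 0 < p12 - p22 + 1)
    (c : ℝ) (hc : 0 < c)
    (hbound : ∀ t ∈ Set.Ico (0:ℝ) T,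
      c * (h1 t / h2 t) ^ (1 / (p21 - p11 + 1)) *
          y2 t ^ ((p12 - p22 + 1) / (p21 - p11 + 1)) ≤ y1 t) :
    (∀ t ∈ Set.Ico (0:ℝ) T,
      (∫ s in (y1 0)..(y1 t),
          s ^ (-(p11 + p12 * ((p21 - p11 + 1) / (p12 - p22 + 1))))) ≤
        c ^ (-(p12 * (p21 - p11 + 1) / (p12 - p22 + 1))) *
          ∫ s in (0:ℝ)..t, h1 s * (h1 s / h2 s) ^ (-(p12 / (p12 - p22 + 1)))) ∧
    (((p11 + p12 * ((p21 - p11 + 1) / (p12 - p22 + 1))) ≤ 1 ∨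
        (1 < p11 + p12 * ((p21 - p11 + 1) / (p12 - p22 + 1)) ∧
          ∀ t : ℝ, 0 ≤ t →
            c ^ (-(p12 * (p21 - p11 + 1) / (p12 - p22 + 1))) *
                (∫ s in (0:ℝ)..t, h1 s * (h1 s / h2 s) ^ (-(p12 / (p12 - p22 + 1)))) ≤
              y1 0 ^ (1 - (p11 + p12 * ((p21 - p11 + 1) / (p12 - p22 + 1)))) /
                ((p11 + p12 * ((p21 - p11 + 1) / (p12 - p22 + 1))) - 1))) →
      ∀ S : ℝ, 0 < S → ∃ C : ℝ, ∀ t ∈ Set.Ico (0:ℝ) T, t ≤ S → y1 t ≤ C) := by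
  set α := p11 + p12 * ((p21 - p11 + 1) / (p12 - p22 + 1))
  set g : ℝ → ℝ := fun s => h1 s * (h1 s / h2 s) ^ (-(p12 / (p12 - p22 + 1)))
  set F : ℝ → ℝ := fun t =>
    c ^ (-(p12 * (p21 - p11 + 1) / (p12 - p22 + 1))) * ∫ s in (0:ℝ)..t, g s
  have hH (s : ℝ) (hs : s ∈ Ici 0) : 0 < h1 s / h2 s := div_pos (hh1p s hs) (hh2p s hs)
  have hg : ContinuousOn g (Ici 0) :=
    hh1c.mul ((hh1c.div hh2c fun s hs => (hh2p s hs).ne').rpow_const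
      fun s hs => Or.inl (hH s hs).ne')
  have hF : StrictMonoOn F (Ici 0) := fun s hs t ht hst =>
    mul_lt_mul_of_pos_left (strictMonoOn_integral_of_pos hg (fun s hs => mul_pos (hh1p s hs)
      (Real.rpow_pos_of_pos (hH s hs) _)) hs ht hst) (Real.rpow_pos_of_pos hc _)
  have hest (t : ℝ) (ht : t ∈ Ico 0 T) : ∫ s in y1 0..y1 t, s ^ (-α) ≤ F t := by
    simp only [F, ← intervalIntegral.integral_const_mul]
    refine integral_le_integral_of_hasDerivWithinAt_mul_le
      (continuousOn_id.rpow_const fun x hx => Or.inl (ne_of_gt hx))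
      (continuousOn_const.mul (hg.mono Ico_subset_Ici_self)) hy1pos hy1d (fun s hs => ?_) ht
    exact mul_rpow_mul_rpow_mul_rpow_neg_le hp12 ha1 ha2 hc (hh1p s hs.1).le (hH s hs.1)
      (hy1pos s hs) (hy2pos s hs) (hbound s hs)
  refine ⟨hest, fun hα _ _ => ?_⟩
  obtain ⟨C, hC⟩ := exists_le_of_integral_rpow_neg_le (B := F T) (hy1pos 0 ⟨le_rfl, hT⟩)
    (hα.imp_right fun h => ⟨h.1, (hF hT.le (by linarith : 0 ≤ T + 1) (lt_add_one T)).trans_le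
      (h.2 (T + 1) (by linarith))⟩)
  exact ⟨C, fun t ht _ => hC (y1 t) (hy1pos t ht)
    ((hest t ht).trans (hF.monotoneOn ht.1 hT.le ht.2.le))⟩

/-- Theorem 1.3(a.2) of the paper (global existence estimate for
the first component). With `a₁ = p₂₁-p₁₁+1 > 0`, `a₂ = p₁₂-p₂₂+1 > 0`, a
constant `c > 0` with `y₁ ≥ c (h₁/h₂)^{1/a₁} y₂^{a₂/a₁}` on `[0,T)` and
`α₁ = p₁₁+p₁₂ a₁/a₂`, `F(t) = c^{-p₁₂a₁/a₂} ∫₀ᵗ h₁(s)(h₁(s)/h₂(s))^{-p₁₂/a₂} ds`,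
one has `∫_{y₁(0)}^{y₁(t)} s^{-α₁} ds ≤ F(t)` on `[0,T)`; consequently, if
`α₁ ≤ 1`, or `α₁ > 1` and `F(t) ≤ y₁(0)^{1-α₁}/(α₁-1)` for all `t ≥ 0`, then
`y₁` is bounded on `[0,T) ∩ [0,S]` for every finite `S > 0`. -/
theorem statement14 (p11 p12 p21 p22 : ℝ)
    (hp11 : 0 ≤ p11) (hp12 : 0 ≤ p12) (hp21 : 0 ≤ p21) (hp22 : 0 ≤ p22)
    (h1 h2 : ℝ → ℝ)
    (hh1c : ContinuousOn h1 (Set.Ici 0)) (hh2c : ContinuousOn h2 (Set.Ici 0))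
    (hh1p : ∀ t : ℝ, 0 ≤ t → 0 < h1 t) (hh2p : ∀ t : ℝ, 0 ≤ t → 0 < h2 t)
    (T : ℝ) (hT : 0 < T)
    (y1 y2 : ℝ → ℝ)
    (hy1pos : ∀ t ∈ Set.Ico (0:ℝ) T, 0 < y1 t)
    (hy2pos : ∀ t ∈ Set.Ico (0:ℝ) T, 0 < y2 t)
    (hy1d : ∀ t ∈ Set.Ico (0:ℝ) T,
      HasDerivWithinAt y1 (h1 t * y1 t ^ p11 * y2 t ^ p12) (Set.Ico 0 T) t)
    (hy2d : ∀ t ∈ Set.Ico (0:ℝ) T,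
      HasDerivWithinAt y2 (h2 t * y2 t ^ p22 * y1 t ^ p21) (Set.Ico 0 T) t)
    (ha1 : 0 < p21 - p11 + 1) (ha2 : 0 < p12 - p22 + 1)
    (c : ℝ) (hc : 0 < c)
    (hbound : ∀ t ∈ Set.Ico (0:ℝ) T,
      c * (h1 t / h2 t) ^ (1 / (p21 - p11 + 1)) *
          y2 t ^ ((p12 - p22 + 1) / (p21 - p11 + 1)) ≤ y1 t) :
    (∀ t ∈ Set.Ico (0:ℝ) T,
      (∫ s in (y1 0)..(y1 t),
          s ^ (-(p11 + p12 * ((p21 - p11 + 1) / (p12 - p22 + 1))))) ≤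
        c ^ (-(p12 * (p21 - p11 + 1) / (p12 - p22 + 1))) *
          ∫ s in (0:ℝ)..t, h1 s * (h1 s / h2 s) ^ (-(p12 / (p12 - p22 + 1)))) ∧
    (((p11 + p12 * ((p21 - p11 + 1) / (p12 - p22 + 1))) ≤ 1 ∨
        (1 < p11 + p12 * ((p21 - p11 + 1) / (p12 - p22 + 1)) ∧
          ∀ t : ℝ, 0 ≤ t →
            c ^ (-(p12 * (p21 - p11 + 1) / (p12 - p22 + 1))) *
                (∫ s in (0:ℝ)..t, h1 s * (h1 s / h2 s) ^ (-(p12 / (p12 - p22 + 1)))) ≤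
              y1 0 ^ (1 - (p11 + p12 * ((p21 - p11 + 1) / (p12 - p22 + 1)))) /
                ((p11 + p12 * ((p21 - p11 + 1) / (p12 - p22 + 1))) - 1))) →
      ∀ S : ℝ, 0 < S → ∃ C : ℝ, ∀ t ∈ Set.Ico (0:ℝ) T, t ≤ S → y1 t ≤ C) :=
  statement14_general p11 p12 p21 p22 hp12 h1 h2 hh1c hh2c hh1p hh2p T hT y1 y2 hy1pos hy2pos hy1d
    ha1 ha2 c hc hbound
end

section
/- Let (y₁,y₂) : [0,T) → (0,∞)² be a differentiable solution of the ODE system with y₁(0) > 0 and y₂(0) > 1. Assume a₁ > 0 and a₂ = 0, and suppose c > 0 is a constant such that y₁(t)^{a₁} ≥ c·(h₁(t)/h₂(t))·log(y₂(t)) for all t ∈ [0,T). Then for every t ∈ [0,T): c^{p₂₁/a₁}·∫₀ᵗ h₂(s)·(h₁(s)/h₂(s))^{p₂₁/a₁} ds < ∫_{y₂(0)}^{∞} ds/(s^{p₂₂}·(log s)^{p₂₁/a₁}), where the improper integral on the right may be infinite. (In particular, if the right-hand side is finite, T is bounded above whenever the left-hand side, as a function of its upper limit, eventually exceeds it.)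 -/
open MeasureTheory Set

/-!
Put `q = p₂₁/a₁` and `φ(s) = 1/(s^{p₂₂} (log s)^q)`. Then `y₂` is increasing,
so `y₂ > 1` on `[0,T)`, and by the chain rule
`d/dt ∫_{y₂(0)}^{y₂(t)} φ = φ(y₂) y₂' = h₂ y₁^{p₂₁} / (log y₂)^q`.
Raising the hypothesis `y₁^{a₁} ≥ c (h₁/h₂) log y₂` to the power `q` shows that this
derivative dominates `c^q h₂ (h₁/h₂)^q`; integrating over `[0,t]` gives
`c^q ∫₀ᵗ h₂ (h₁/h₂)^q ≤ ∫_{y₂(0)}^{y₂(t)} φ`, and the positive tail `∫_{y₂(t)}^∞ φ` makes the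
inequality with the improper integral strict.
-/

theorem monotoneOn_of_hasDerivWithinAt_self_nonneg {D : Set ℝ} (hD : Convex ℝ D)
    {f f' : ℝ → ℝ} (hf : ∀ x ∈ D, HasDerivWithinAt f (f' x) D x)
    (hf'₀ : ∀ x ∈ D, 0 ≤ f' x) : MonotoneOn f D :=
  monotoneOn_of_hasDerivWithinAt_nonneg hD (fun x hx => (hf x hx).continuousWithinAt)
    (fun x hx => (hf x (interior_subset hx)).mono interior_subset)
    (fun x hx => hf'₀ x (interior_subset hx))

theorem hasDerivAt_intervalIntegral_right_of_continuousOn {φ : ℝ → ℝ} {U : Set ℝ}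
    (hU : IsOpen U) (hU' : U.OrdConnected) (hφ : ContinuousOn φ U) {a u : ℝ}
    (ha : a ∈ U) (hu : u ∈ U) :
    HasDerivAt (fun v => ∫ s in a..v, φ s) (φ u) u :=
  intervalIntegral.integral_hasDerivAt_right
    ((hφ.mono (hU'.uIcc_subset ha hu)).intervalIntegrable)
    (hφ.stronglyMeasurableAtFilter hU u hu) (hφ.continuousAt (hU.mem_nhds hu))

theorem intervalIntegral_le_intervalIntegral_comp {a b : ℝ} (hab : a ≤ b)
    {y y' φ g : ℝ → ℝ} {U : Set ℝ} (hU : IsOpen U) (hU' : U.OrdConnected)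
    (hφ : ContinuousOn φ U) (hyU : MapsTo y (Icc a b) U)
    (hy : ∀ x ∈ Icc a b, HasDerivWithinAt y (y' x) (Icc a b) x)
    (hg : ContinuousOn g (Icc a b)) (hgle : ∀ x ∈ Ioo a b, g x ≤ φ (y x) * y' x) :
    ∫ x in a..b, g x ≤ ∫ s in y a..y b, φ s := by
  have hya : y a ∈ U := hyU (left_mem_Icc.2 hab)
  have hΦ : ∀ u ∈ U, HasDerivAt (fun v => ∫ s in y a..v, φ s) (φ u) u := fun u hu =>
    hasDerivAt_intervalIntegral_right_of_continuousOn hU hU' hφ hya hu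
  have hcont : ContinuousOn (fun x => ∫ s in y a..y x, φ s) (Icc a b) :=
    ContinuousOn.comp (g := fun v => ∫ s in y a..v, φ s)
      (fun u hu => (hΦ u hu).continuousAt.continuousWithinAt)
      (fun x hx => (hy x hx).continuousWithinAt) hyU
  have hderiv : ∀ x ∈ Ioo a b,
      HasDerivWithinAt (fun x => ∫ s in y a..y x, φ s) (φ (y x) * y' x) (Ioi x) x := by
    intro x hx
    have hx' : x ∈ Icc a b := Ioo_subset_Icc_self hx
    refine ((hΦ (y x) (hyU hx')).comp_hasDerivWithinAt x (hy x hx')).mono_of_mem_nhdsWithin ?_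
    exact mem_nhdsWithin_of_mem_nhds (Icc_mem_nhds hx.1 hx.2)
  simpa using intervalIntegral.integral_le_sub_of_hasDeriv_right_of_le hab hcont hderiv
    (hg.integrableOn_Icc) hgle

theorem ofReal_intervalIntegral_lt_setLIntegral_Ioi {φ : ℝ → ℝ} {a b : ℝ} (hab : a ≤ b)
    (hφ : ContinuousOn φ (Ici a)) (hpos : ∀ x ∈ Ici a, 0 < φ x) :
    ENNReal.ofReal (∫ x in a..b, φ x) < ∫⁻ x in Ioi a, ENNReal.ofReal (φ x) := by
  have hint : ∀ u v, a ≤ u → a ≤ v → IntervalIntegrable φ volume u v :=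
    fun u v hu hv => (hφ.mono (ordConnected_Ici.uIcc_subset hu hv)).intervalIntegrable
  have hab' : a ≤ b + 1 := by linarith
  have htail : 0 < ∫ x in b..b + 1, φ x :=
    intervalIntegral.intervalIntegral_pos_of_pos_on (hint _ _ hab hab')
      (fun x hx => hpos x (hab.trans hx.1.le)) (lt_add_one b)
  calc ENNReal.ofReal (∫ x in a..b, φ x)
      < ENNReal.ofReal (∫ x in a..b + 1, φ x) := by
        rw [← intervalIntegral.integral_add_adjacent_intervals (hint _ _ le_rfl hab)
          (hint _ _ hab hab')]
        have hnonneg : 0 ≤ ∫ x in a..b, φ x :=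
          intervalIntegral.integral_nonneg hab fun x hx => (hpos x hx.1).le
        exact ENNReal.ofReal_lt_ofReal_iff'.2 ⟨by linarith, by linarith⟩
    _ = ∫⁻ x in Ioc a (b + 1), ENNReal.ofReal (φ x) := by
        rw [intervalIntegral.integral_of_le hab']
        refine ofReal_integral_eq_lintegral_ofReal
          ((hint _ _ le_rfl hab').1) ?_
        exact (ae_restrict_iff' measurableSet_Ioc).2
          (Filter.Eventually.of_forall fun x hx => (hpos x hx.1.le).le)
    _ ≤ ∫⁻ x in Ioi a, ENNReal.ofReal (φ x) := lintegral_mono_set Ioc_subset_Ioi_self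

theorem continuousOn_one_div_rpow_mul_log_rpow (p q : ℝ) :
    ContinuousOn (fun s : ℝ => 1 / (s ^ p * Real.log s ^ q)) (Ioi 1) := by
  intro s hs
  have hs0 : s ≠ 0 := (zero_lt_one.trans hs).ne'
  have hlog : Real.log s ≠ 0 := (Real.log_pos hs).ne'
  refine ContinuousAt.continuousWithinAt (continuousAt_const.div
    ((Real.continuousAt_rpow_const s p (Or.inl hs0)).mul
      ((Real.continuousAt_log hs0).rpow_const (Or.inl hlog))) ?_)
  exact (mul_pos (Real.rpow_pos_of_pos (zero_lt_one.trans hs) p)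
    (Real.rpow_pos_of_pos (Real.log_pos hs) q)).ne'

theorem one_div_rpow_mul_log_rpow_pos (p q : ℝ) {s : ℝ} (hs : 1 < s) :
    0 < 1 / (s ^ p * Real.log s ^ q) :=
  one_div_pos.2 (mul_pos (Real.rpow_pos_of_pos (zero_lt_one.trans hs) p)
    (Real.rpow_pos_of_pos (Real.log_pos hs) q))

/-- With `k = h₁/h₂`, `H = h₂`, `X = y₁`, `Y = y₂`, the right side is `φ(y₂) y₂'` for the weight
`φ(s) = 1/(s^r (log s)^{p/a})`, and the left side is the integrand `c^q h₂ (h₁/h₂)^q`. -/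
theorem rpow_div_integrand_le_of_le_rpow {a p r c k H X Y : ℝ} (ha : 0 < a) (hp : 0 ≤ p)
    (hc : 0 ≤ c) (hk : 0 ≤ k) (hH : 0 ≤ H) (hX : 0 < X) (hY : 1 < Y)
    (hbound : c * k * Real.log Y ≤ X ^ a) :
    c ^ (p / a) * (H * k ^ (p / a)) ≤
      1 / (Y ^ r * Real.log Y ^ (p / a)) * (H * Y ^ r * X ^ p) := by
  set q := p / a with hq_def
  have hq : 0 ≤ q := div_nonneg hp ha.le
  have hlog : 0 < Real.log Y := Real.log_pos hY
  have hYr : 0 < Y ^ r := Real.rpow_pos_of_pos (zero_lt_one.trans hY) r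
  have hLq : 0 < Real.log Y ^ q := Real.rpow_pos_of_pos hlog q
  have hpow : (c * k * Real.log Y) ^ q ≤ X ^ p :=
    calc (c * k * Real.log Y) ^ q ≤ (X ^ a) ^ q :=
          Real.rpow_le_rpow (by positivity) hbound hq
      _ = X ^ p := by rw [← Real.rpow_mul hX.le, hq_def, mul_div_cancel₀ _ ha.ne']
  have hrhs : 1 / (Y ^ r * Real.log Y ^ q) * (H * Y ^ r * X ^ p) =
      H * X ^ p / Real.log Y ^ q := by
    field_simp
  rw [hrhs, le_div_iff₀ hLq]
  calc c ^ q * (H * k ^ q) * Real.log Y ^ q = H * (c * k * Real.log Y) ^ q := by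
        rw [Real.mul_rpow (by positivity) hlog.le, Real.mul_rpow hc hk]; ring
    _ ≤ H * X ^ p := mul_le_mul_of_nonneg_left hpow hH

theorem statement15_general (p11 p21 p22 : ℝ)
    (hp21 : 0 ≤ p21)
    (h1 h2 : ℝ → ℝ)
    (hh1c : ContinuousOn h1 (Set.Ici 0)) (hh2c : ContinuousOn h2 (Set.Ici 0))
    (hh1p : ∀ t : ℝ, 0 ≤ t → 0 < h1 t) (hh2p : ∀ t : ℝ, 0 ≤ t → 0 < h2 t)
    (T : ℝ)
    (y1 y2 : ℝ → ℝ)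
    (hy1pos : ∀ t ∈ Set.Ico (0:ℝ) T, 0 < y1 t)
    (hy2pos : ∀ t ∈ Set.Ico (0:ℝ) T, 0 < y2 t)
    (hy20 : 1 < y2 0)
    (hy2d : ∀ t ∈ Set.Ico (0:ℝ) T,
      HasDerivWithinAt y2 (h2 t * y2 t ^ p22 * y1 t ^ p21) (Set.Ico 0 T) t)
    (ha1 : 0 < p21 - p11 + 1)
    (c : ℝ) (hc : 0 < c)
    (hbound : ∀ t ∈ Set.Ico (0:ℝ) T,
      c * (h1 t / h2 t) * Real.log (y2 t) ≤ y1 t ^ (p21 - p11 + 1)) :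
    ∀ t ∈ Set.Ico (0:ℝ) T,
      ENNReal.ofReal (c ^ (p21 / (p21 - p11 + 1)) *
          ∫ s in (0:ℝ)..t, h2 s * (h1 s / h2 s) ^ (p21 / (p21 - p11 + 1))) <
        ∫⁻ s in Set.Ioi (y2 0),
          ENNReal.ofReal
            (1 / (s ^ p22 * Real.log s ^ (p21 / (p21 - p11 + 1)))) := by
  intro t ht
  set q := p21 / (p21 - p11 + 1)
  have hy2mono : MonotoneOn y2 (Ico 0 T) :=
    monotoneOn_of_hasDerivWithinAt_self_nonneg (convex_Ico 0 T) hy2d fun r hr => by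
      have := hh2p r hr.1; have := hy2pos r hr; have := hy1pos r hr; positivity
  have h0 : (0 : ℝ) ∈ Ico 0 T := ⟨le_rfl, ht.1.trans_lt ht.2⟩
  have hy2gt1 : ∀ r ∈ Ico 0 T, 1 < y2 r := fun r hr => hy20.trans_le (hy2mono h0 hr hr.1)
  have hsub : Icc 0 t ⊆ Ico 0 T := Icc_subset_Ico_right ht.2
  have hg : ContinuousOn (fun s => c ^ q * (h2 s * (h1 s / h2 s) ^ q)) (Icc 0 t) :=
    (continuousOn_const.mul (hh2c.mul ((hh1c.div hh2c fun s hs => (hh2p s hs).ne').rpow_const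
      fun s hs => Or.inl (div_pos (hh1p s hs) (hh2p s hs)).ne'))).mono Icc_subset_Ici_self
  have hcomp := intervalIntegral_le_intervalIntegral_comp ht.1 isOpen_Ioi ordConnected_Ioi
    (continuousOn_one_div_rpow_mul_log_rpow p22 q) (fun r hr => hy2gt1 r (hsub hr))
    (fun r hr => (hy2d r (hsub hr)).mono hsub) hg fun r hr =>
      have hr' : r ∈ Ico 0 T := hsub (Ioo_subset_Icc_self hr)
      rpow_div_integrand_le_of_le_rpow ha1 hp21 hc.le (div_pos (hh1p r hr'.1) (hh2p r hr'.1)).le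
        (hh2p r hr'.1).le (hy1pos r hr') (hy2gt1 r hr') (hbound r hr')
  rw [← intervalIntegral.integral_const_mul]
  calc _ ≤ ENNReal.ofReal (∫ s in y2 0..y2 t, 1 / (s ^ p22 * Real.log s ^ q)) :=
        ENNReal.ofReal_le_ofReal hcomp
    _ < _ := ofReal_intervalIntegral_lt_setLIntegral_Ioi (hy2mono h0 ht ht.1)
        ((continuousOn_one_div_rpow_mul_log_rpow p22 q).mono (Ici_subset_Ioi.2 hy20))
        fun s hs => one_div_rpow_mul_log_rpow_pos p22 q (hy20.trans_le hs)

/-- Theorem 1.3(b.1) of the paper. With `a₁ = p₂₁-p₁₁+1 > 0`,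
`a₂ = p₁₂-p₂₂+1 = 0`, `y₂(0) > 1`, and a constant `c > 0` with
`y₁^{a₁} ≥ c (h₁/h₂) log y₂` on `[0,T)`, one has, for every `t ∈ [0,T)`,
`c^{p₂₁/a₁} ∫₀ᵗ h₂(s)(h₁(s)/h₂(s))^{p₂₁/a₁} ds <
  ∫_{y₂(0)}^{∞} ds/(s^{p₂₂}(log s)^{p₂₁/a₁})`, where the improper integral on
the right, taken as a Lebesgue integral with values in `[0,∞]`, may be
infinite. -/
theorem statement15 (p11 p12 p21 p22 : ℝ)
    (hp11 : 0 ≤ p11) (hp12 : 0 ≤ p12) (hp21 : 0 ≤ p21) (hp22 : 0 ≤ p22)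
    (h1 h2 : ℝ → ℝ)
    (hh1c : ContinuousOn h1 (Set.Ici 0)) (hh2c : ContinuousOn h2 (Set.Ici 0))
    (hh1p : ∀ t : ℝ, 0 ≤ t → 0 < h1 t) (hh2p : ∀ t : ℝ, 0 ≤ t → 0 < h2 t)
    (T : ℝ) (hT : 0 < T)
    (y1 y2 : ℝ → ℝ)
    (hy1pos : ∀ t ∈ Set.Ico (0:ℝ) T, 0 < y1 t)
    (hy2pos : ∀ t ∈ Set.Ico (0:ℝ) T, 0 < y2 t)
    (hy10 : 0 < y1 0) (hy20 : 1 < y2 0)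
    (hy1d : ∀ t ∈ Set.Ico (0:ℝ) T,
      HasDerivWithinAt y1 (h1 t * y1 t ^ p11 * y2 t ^ p12) (Set.Ico 0 T) t)
    (hy2d : ∀ t ∈ Set.Ico (0:ℝ) T,
      HasDerivWithinAt y2 (h2 t * y2 t ^ p22 * y1 t ^ p21) (Set.Ico 0 T) t)
    (ha1 : 0 < p21 - p11 + 1) (ha2 : p12 - p22 + 1 = 0)
    (c : ℝ) (hc : 0 < c)
    (hbound : ∀ t ∈ Set.Ico (0:ℝ) T,
      c * (h1 t / h2 t) * Real.log (y2 t) ≤ y1 t ^ (p21 - p11 + 1)) :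
    ∀ t ∈ Set.Ico (0:ℝ) T,
      ENNReal.ofReal (c ^ (p21 / (p21 - p11 + 1)) *
          ∫ s in (0:ℝ)..t, h2 s * (h1 s / h2 s) ^ (p21 / (p21 - p11 + 1))) <
        ∫⁻ s in Set.Ioi (y2 0),
          ENNReal.ofReal
            (1 / (s ^ p22 * Real.log s ^ (p21 / (p21 - p11 + 1)))) :=
  statement15_general p11 p21 p22 hp21 h1 h2 hh1c hh2c hh1p hh2p T y1 y2 hy1pos hy2pos hy20 hy2d ha1
    c hc hbound
end
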